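/- arXiv:1011.4880 — 12 statements merged into one kernel-verified Lean document; each statement's English description precedes it below -/
import Mathlib

section
/- Let a < b be real numbers and let f and g be differentiable functions on the open interval (a,b). Suppose that either g'(x) > 0 for all x ∈ (a,b) or g'(x) < 0 for all x ∈ (a,b). If the function x ↦ f'(x)/g'(x) is strictly increasing on (a,b) and the finite one-sided limits f(a⁺) and g(a⁺) exist, then the function x ↦ (f(x) − f(a⁺))/(g(x) − g(a⁺)) is strictly increasing on (a,b). (Note that g(x) ≠ g(a⁺) for all x ∈ (a,b), since g is strictly monotone on (a,b).) -/
open Set Filter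

private lemma lhopital_core
    (a b : ℝ) (hab : a < b) (f g f' g' : ℝ → ℝ)
    (hf : ∀ x ∈ Set.Ioo a b, HasDerivAt f (f' x) x)
    (hg : ∀ x ∈ Set.Ioo a b, HasDerivAt g (g' x) x)
    (hg' : ∀ x ∈ Set.Ioo a b, 0 < g' x)
    (hmono : StrictMonoOn (fun x => f' x / g' x) (Set.Ioo a b))
    (fa ga : ℝ)
    (hfa : Filter.Tendsto f (nhdsWithin a (Set.Ioi a)) (nhds fa))
    (hga : Filter.Tendsto g (nhdsWithin a (Set.Ioi a)) (nhds ga)) :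
    StrictMonoOn (fun x => (f x - fa) / (g x - ga)) (Set.Ioo a b) := by
  -- g is strictly increasing on (a,b)
  have hgmono : StrictMonoOn g (Set.Ioo a b) := by
    apply StrictMonoOn.mono (s := Set.Ioo a b) ?_ le_rfl
    apply strictMonoOn_of_deriv_pos (convex_Ioo a b)
    · exact fun z hz => ((hg z hz).continuousAt).continuousWithinAt
    · intro z hz
      rw [interior_Ioo] at hz
      rw [(hg z hz).deriv]
      exact hg' z hz
  -- Cauchy MVT on subintervals
  have mvt : ∀ x y, x ∈ Set.Ioo a b → y ∈ Set.Ioo a b → x < y →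
      ∃ c ∈ Set.Ioo x y, (f y - f x) / (g y - g x) = f' c / g' c := by
    intro x y hx hy hxy
    have hsub : Set.Icc x y ⊆ Set.Ioo a b := Set.Icc_subset_Ioo hx.1 hy.2
    have hsub' : Set.Ioo x y ⊆ Set.Ioo a b := fun z hz => hsub ⟨le_of_lt hz.1, le_of_lt hz.2⟩
    have hfc : ContinuousOn f (Set.Icc x y) :=
      fun z hz => ((hf z (hsub hz)).continuousAt).continuousWithinAt
    have hgc : ContinuousOn g (Set.Icc x y) :=
      fun z hz => ((hg z (hsub hz)).continuousAt).continuousWithinAt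
    obtain ⟨c, hc, heq⟩ := exists_ratio_hasDerivAt_eq_ratio_slope f f' hxy hfc
      (fun z hz => hf z (hsub' hz)) g g' hgc (fun z hz => hg z (hsub' hz))
    refine ⟨c, hc, ?_⟩
    have hgcpos : 0 < g' c := hg' c (hsub' hc)
    have hgxy : g x < g y := hgmono hx hy hxy
    have hne1 : g y - g x ≠ 0 := by linarith
    have hne2 : g' c ≠ 0 := ne_of_gt hgcpos
    field_simp
    linarith [heq]
  -- ga < g x for x in (a,b)
  have hga_lt : ∀ x ∈ Set.Ioo a b, ga < g x := by
    intro x hx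
    obtain ⟨y, hy1, hy2⟩ := exists_between hx.1
    have hy : y ∈ Set.Ioo a b := ⟨hy1, hy2.trans hx.2⟩
    have h1 : ga ≤ g y := by
      apply le_of_tendsto hga
      filter_upwards [Ioo_mem_nhdsGT_of_mem (Set.mem_Ico.2 ⟨le_refl a, hy1⟩)] with z hz
      exact le_of_lt (hgmono ⟨hz.1, hz.2.trans hy.2⟩ hy hz.2)
    exact lt_of_le_of_lt h1 (hgmono hy hx hy2)
  -- key bound: (f x - fa)/(g x - ga) ≤ f' x / g' x
  have hA : ∀ x ∈ Set.Ioo a b, (f x - fa) / (g x - ga) ≤ f' x / g' x := by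
    intro x hx
    have hdx : (0:ℝ) < g x - ga := by linarith [hga_lt x hx]
    have htend : Filter.Tendsto (fun y => (f x - f y) / (g x - g y))
        (nhdsWithin a (Set.Ioi a)) (nhds ((f x - fa) / (g x - ga))) :=
      (tendsto_const_nhds.sub hfa).div (tendsto_const_nhds.sub hga) (ne_of_gt hdx)
    apply le_of_tendsto htend
    filter_upwards [Ioo_mem_nhdsGT_of_mem (Set.mem_Ico.2 ⟨le_refl a, hx.1⟩)] with y hy
    have hy' : y ∈ Set.Ioo a b := ⟨hy.1, hy.2.trans hx.2⟩
    obtain ⟨c, hc, heq⟩ := mvt y x hy' hx hy.2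
    have hc' : c ∈ Set.Ioo a b := ⟨hy.1.trans hc.1, hc.2.trans hx.2⟩
    calc (f x - f y) / (g x - g y) = f' c / g' c := heq
      _ ≤ f' x / g' x := le_of_lt (hmono hc' hx hc.2)
  -- main argument
  intro x hx y hy hxy
  obtain ⟨c, hc, heq⟩ := mvt x y hx hy hxy
  have hc' : c ∈ Set.Ioo a b := ⟨hx.1.trans hc.1, hc.2.trans hy.2⟩
  have h1 : (f x - fa) / (g x - ga) < f' c / g' c :=
    lt_of_le_of_lt (hA x hx) (hmono hx hc' hc.1)
  have hdx : (0:ℝ) < g x - ga := by linarith [hga_lt x hx]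
  have hdy : (0:ℝ) < g y - ga := by linarith [hga_lt y hy]
  have hgxy : (0:ℝ) < g y - g x := by linarith [hgmono hx hy hxy]
  set Q := f' c / g' c with hQ
  have hfy : f y - f x = Q * (g y - g x) := (div_eq_iff (ne_of_gt hgxy)).1 heq
  have h1' : f x - fa < Q * (g x - ga) := (div_lt_iff₀ hdx).1 h1
  show (f x - fa) / (g x - ga) < (f y - fa) / (g y - ga)
  rw [div_lt_div_iff₀ hdx hdy]
  nlinarith [mul_pos hgxy (sub_pos.2 h1'), mul_lt_mul_of_pos_left h1' hgxy]

/-- L'Hôpital-type rule for monotonicity (left endpoint, increasing case):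
if `f'/g'` is strictly increasing on `(a,b)`, `g'` has constant sign on `(a,b)`,
and the finite one-sided limits `f(a⁺)`, `g(a⁺)` exist, then
`x ↦ (f x - f(a⁺)) / (g x - g(a⁺))` is strictly increasing on `(a,b)`. -/
theorem lhopital_monotone_left_increasing
    (a b : ℝ) (hab : a < b) (f g f' g' : ℝ → ℝ)
    (hf : ∀ x ∈ Set.Ioo a b, HasDerivAt f (f' x) x)
    (hg : ∀ x ∈ Set.Ioo a b, HasDerivAt g (g' x) x)
    (hg' : (∀ x ∈ Set.Ioo a b, 0 < g' x) ∨ (∀ x ∈ Set.Ioo a b, g' x < 0))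
    (hmono : StrictMonoOn (fun x => f' x / g' x) (Set.Ioo a b))
    (fa ga : ℝ)
    (hfa : Filter.Tendsto f (nhdsWithin a (Set.Ioi a)) (nhds fa))
    (hga : Filter.Tendsto g (nhdsWithin a (Set.Ioi a)) (nhds ga)) :
    StrictMonoOn (fun x => (f x - fa) / (g x - ga)) (Set.Ioo a b) := by
  rcases hg' with hpos | hneg
  · exact lhopital_core a b hab f g f' g' hf hg hpos hmono fa ga hfa hga
  · have key := lhopital_core a b hab (fun x => -f x) (fun x => -g x)
      (fun x => -f' x) (fun x => -g' x)
      (fun x hx => (hf x hx).neg) (fun x hx => (hg x hx).neg)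
      (fun x hx => by simpa using hneg x hx)
      (by intro x hx y hy hxy
          simpa [neg_div_neg_eq] using hmono hx hy hxy)
      (-fa) (-ga) hfa.neg hga.neg
    intro x hx y hy hxy
    have := key hx hy hxy
    simp only [neg_sub_neg] at this
    have e1 : ∀ z : ℝ, (fa - f z) / (ga - g z) = (f z - fa) / (g z - ga) := by
      intro z
      rw [← neg_div_neg_eq]
      ring_nf
    simpa [e1] using this
end

section
/- Let a < b be real numbers and let f and g be differentiable functions on the open interval (a,b). Suppose that either g'(x) > 0 for all x ∈ (a,b) or g'(x) < 0 for all x ∈ (a,b). If the function x ↦ f'(x)/g'(x) is strictly decreasing on (a,b) and the finite one-sided limits f(a⁺) and g(a⁺) exist, then the function x ↦ (f(x) − f(a⁺))/(g(x) − g(a⁺)) is strictly decreasing on (a,b). -/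
open Set Filter

private theorem lhopital_aux_pos
    (a b : ℝ) (hab : a < b) (f g f' g' : ℝ → ℝ)
    (hf : ∀ x ∈ Set.Ioo a b, HasDerivAt f (f' x) x)
    (hg : ∀ x ∈ Set.Ioo a b, HasDerivAt g (g' x) x)
    (hg' : ∀ x ∈ Set.Ioo a b, 0 < g' x)
    (hanti : StrictAntiOn (fun x => f' x / g' x) (Set.Ioo a b))
    (fa ga : ℝ)
    (hfa : Filter.Tendsto f (nhdsWithin a (Set.Ioi a)) (nhds fa))
    (hga : Filter.Tendsto g (nhdsWithin a (Set.Ioi a)) (nhds ga)) :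
    StrictAntiOn (fun x => (f x - fa) / (g x - ga)) (Set.Ioo a b) := by
  -- Cauchy MVT packaged for subintervals
  have key : ∀ s t : ℝ, a < s → s < t → t < b →
      ∃ c ∈ Set.Ioo s t, 0 < g t - g s ∧ (f t - f s) / (g t - g s) = f' c / g' c := by
    intro s t has hst htb
    have hsub : Set.Icc s t ⊆ Set.Ioo a b := fun z hz =>
      ⟨lt_of_lt_of_le has hz.1, lt_of_le_of_lt hz.2 htb⟩
    have hsub' : Set.Ioo s t ⊆ Set.Ioo a b := fun z hz =>
      hsub ⟨le_of_lt hz.1, le_of_lt hz.2⟩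
    have hfc : ContinuousOn f (Set.Icc s t) := fun z hz =>
      ((hf z (hsub hz)).continuousAt).continuousWithinAt
    have hgc : ContinuousOn g (Set.Icc s t) := fun z hz =>
      ((hg z (hsub hz)).continuousAt).continuousWithinAt
    obtain ⟨c, hc, heq⟩ := exists_ratio_hasDerivAt_eq_ratio_slope f f' hst hfc
      (fun x hx => hf x (hsub' hx)) g g' hgc (fun x hx => hg x (hsub' hx))
    obtain ⟨d, hd, hdeq⟩ := exists_hasDerivAt_eq_slope g g' hst hgc
      (fun x hx => hg x (hsub' hx))
    have hgpos : 0 < g t - g s := by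
      have h1 : 0 < g' d := hg' d (hsub' hd)
      rw [hdeq] at h1
      have := sub_pos.2 hst
      exact (div_pos_iff.1 h1).elim (fun h => h.1) (fun h => absurd h.2 (not_lt.2 this.le))
    refine ⟨c, hc, hgpos, ?_⟩
    have hgc' : 0 < g' c := hg' c (hsub' hc)
    rw [div_eq_div_iff (ne_of_gt hgpos) (ne_of_gt hgc')]
    linarith [heq]
  intro x hx y hy hxy
  obtain ⟨c, hc, hCpos, hAC⟩ := key x y hx.1 hxy hy.2
  have hcmem : c ∈ Set.Ioo a b := ⟨lt_trans hx.1 hc.1, lt_trans hc.2 hy.2⟩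
  -- Show 0 < g x - ga
  set m : ℝ := (a + x) / 2 with hm
  have ham : a < m := by simp only [hm]; linarith [hx.1]
  have hmx : m < x := by simp only [hm]; linarith [hx.1]
  have hmb : m < b := lt_trans hmx hx.2
  have hgam : ga ≤ g m := by
    refine le_of_tendsto hga ?_
    filter_upwards [Ioo_mem_nhdsGT_of_mem (Set.mem_Ico.2 ⟨le_refl a, ham⟩)] with s hs
    obtain ⟨_, _, hgp, _⟩ := key s m hs.1 hs.2 hmb
    linarith
  have hgmx : g m < g x := by
    obtain ⟨_, _, hgp, _⟩ := key m x ham hmx hx.2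
    linarith
  have hD : 0 < g x - ga := by linarith
  -- Show f' x / g' x ≤ (f x - fa)/(g x - ga)
  have hBD : f' x / g' x ≤ (f x - fa) / (g x - ga) := by
    have htend : Filter.Tendsto (fun s => (f x - f s) / (g x - g s))
        (nhdsWithin a (Set.Ioi a)) (nhds ((f x - fa) / (g x - ga))) :=
      ((tendsto_const_nhds.sub hfa).div (tendsto_const_nhds.sub hga) (ne_of_gt hD))
    refine ge_of_tendsto htend ?_
    filter_upwards [Ioo_mem_nhdsGT_of_mem (Set.mem_Ico.2 ⟨le_refl a, hx.1⟩)] with s hs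
    obtain ⟨ξ, hξ, hgp, heq⟩ := key s x hs.1 hs.2 hx.2
    have hξmem : ξ ∈ Set.Ioo a b := ⟨lt_trans hs.1 hξ.1, lt_trans hξ.2 hx.2⟩
    have := hanti hξmem hx hξ.2
    rw [heq]
    exact le_of_lt this
  -- Show f' c / g' c < f' x / g' x
  have hcx : f' c / g' c < f' x / g' x := hanti hx hcmem hc.1
  -- Mediant argument
  have hAC' : (f y - f x) / (g y - g x) < (f x - fa) / (g x - ga) := by
    rw [hAC]; exact lt_of_lt_of_le hcx hBD
  simp only
  have hfy : f y - fa = (f y - f x) + (f x - fa) := by ring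
  have hgy : g y - ga = (g y - g x) + (g x - ga) := by ring
  rw [hfy, hgy]
  rw [div_lt_div_iff₀ (by linarith) hD]
  rw [div_lt_div_iff₀ hCpos hD] at hAC'
  nlinarith [hAC']

/-- L'Hôpital-type rule for monotonicity (left endpoint, decreasing case). -/
theorem lhopital_monotone_left_decreasing
    (a b : ℝ) (hab : a < b) (f g f' g' : ℝ → ℝ)
    (hf : ∀ x ∈ Set.Ioo a b, HasDerivAt f (f' x) x)
    (hg : ∀ x ∈ Set.Ioo a b, HasDerivAt g (g' x) x)
    (hg' : (∀ x ∈ Set.Ioo a b, 0 < g' x) ∨ (∀ x ∈ Set.Ioo a b, g' x < 0))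
    (hanti : StrictAntiOn (fun x => f' x / g' x) (Set.Ioo a b))
    (fa ga : ℝ)
    (hfa : Filter.Tendsto f (nhdsWithin a (Set.Ioi a)) (nhds fa))
    (hga : Filter.Tendsto g (nhdsWithin a (Set.Ioi a)) (nhds ga)) :
    StrictAntiOn (fun x => (f x - fa) / (g x - ga)) (Set.Ioo a b) := by
  rcases hg' with hpos | hneg
  · exact lhopital_aux_pos a b hab f g f' g' hf hg hpos hanti fa ga hfa hga
  · have h := lhopital_aux_pos a b hab (fun z => -f z) (fun z => -g z)
      (fun z => -f' z) (fun z => -g' z)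
      (fun x hx => (hf x hx).neg) (fun x hx => (hg x hx).neg)
      (fun x hx => by simpa using hneg x hx)
      (by
        intro x hx y hy hxy
        simpa [neg_div_neg_eq] using hanti hx hy hxy)
      (-fa) (-ga) hfa.neg hga.neg
    intro x hx y hy hxy
    have := h hx hy hxy
    simp only at this ⊢
    rw [show -f x - -fa = -(f x - fa) by ring, show -g x - -ga = -(g x - ga) by ring,
      show -f y - -fa = -(f y - fa) by ring, show -g y - -ga = -(g y - ga) by ring,
      neg_div_neg_eq, neg_div_neg_eq] at this
    exact this
end

section
/- Let a < b be real numbers and let f and g be differentiable functions on the open interval (a,b). Suppose that either g'(x) > 0 for all x ∈ (a,b) or g'(x) < 0 for all x ∈ (a,b). If the function x ↦ f'(x)/g'(x) is strictly increasing on (a,b) and the finite one-sided limits f(b⁻) and g(b⁻) exist, then the function x ↦ (f(x) − f(b⁻))/(g(x) − g(b⁻)) is strictly increasing on (a,b). -/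
/-! Suppose `g' > 0` (otherwise replace `f, g` by `-f, -g`). For fixed `x`, put
`m = f'(x)/g'(x)`: since `f'/g'` increases, `f - m g` has positive derivative `g' (f'/g' - m)`
on `(x, b)`, so it lies strictly below its limit at `b⁻`, i.e. `f(x) - f(b⁻) < m (g(x) - g(b⁻))`.
Likewise `g(x) < g(b⁻)`. Multiplying by `g'(x) > 0`, this is exactly positivity of the numerator
`f'(x) (g(x) - g(b⁻)) - (f(x) - f(b⁻)) g'(x)` of the derivative of the quotient. -/

open Set Filter Topology

theorem StrictMonoOn.lt_of_tendsto_nhdsLT {α β : Type*} [LinearOrder α] [TopologicalSpace α]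
    [OrderTopology α] [DenselyOrdered α] [Preorder β] [TopologicalSpace β]
    [ClosedIciTopology β] {φ : α → β} {x b : α} {L : β} (hφ : StrictMonoOn φ (Ico x b))
    (hxb : x < b) (hL : Tendsto φ (𝓝[<] b) (𝓝 L)) : φ x < L := by
  obtain ⟨y, hxy, hyb⟩ := exists_between hxb
  have : (𝓝[<] b).NeBot := nhdsLT_neBot_of_exists_lt ⟨x, hxb⟩
  have hyL : φ y ≤ L := ge_of_tendsto hL <| by
    filter_upwards [Ioo_mem_nhdsLT hyb] with t ht
    exact (hφ ⟨hxy.le, hyb⟩ ⟨(hxy.trans ht.1).le, ht.2⟩ ht.1).le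
  exact (hφ ⟨le_rfl, hxb⟩ ⟨hxy.le, hyb⟩ hxy).trans_le hyL

theorem strictMonoOn_of_hasDerivAt_pos {D : Set ℝ} (hD : Convex ℝ D) {φ φ' : ℝ → ℝ}
    (hφ : ∀ t ∈ D, HasDerivAt φ (φ' t) t) (hφ' : ∀ t ∈ interior D, 0 < φ' t) :
    StrictMonoOn φ D :=
  strictMonoOn_of_hasDerivWithinAt_pos hD (fun t ht => (hφ t ht).continuousAt.continuousWithinAt)
    (fun t ht => (hφ t (interior_subset ht)).hasDerivWithinAt) hφ'

theorem lt_of_hasDerivAt_pos_of_tendsto_nhdsLT {φ φ' : ℝ → ℝ} {x b L : ℝ} (hxb : x < b)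
    (hφ : ∀ t ∈ Ico x b, HasDerivAt φ (φ' t) t) (hφ' : ∀ t ∈ Ioo x b, 0 < φ' t)
    (hL : Tendsto φ (𝓝[<] b) (𝓝 L)) : φ x < L :=
  (strictMonoOn_of_hasDerivAt_pos (convex_Ico x b) hφ (by rwa [interior_Ico])).lt_of_tendsto_nhdsLT
    hxb hL

section PositiveDerivative

variable {a b fb gb : ℝ} {f g f' g' : ℝ → ℝ}
  (hf : ∀ x ∈ Ioo a b, HasDerivAt f (f' x) x) (hg : ∀ x ∈ Ioo a b, HasDerivAt g (g' x) x)
  (hg' : ∀ x ∈ Ioo a b, 0 < g' x)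
  (hfb : Tendsto f (𝓝[<] b) (𝓝 fb)) (hgb : Tendsto g (𝓝[<] b) (𝓝 gb))
include hg hg' hgb

theorem lt_of_tendsto_nhdsLT_of_deriv_pos {x : ℝ} (hx : x ∈ Ioo a b) : g x < gb :=
  lt_of_hasDerivAt_pos_of_tendsto_nhdsLT hx.2 (fun t ht => hg t ⟨hx.1.trans_le ht.1, ht.2⟩)
    (fun t ht => hg' t ⟨hx.1.trans ht.1, ht.2⟩) hgb

include hf hfb

theorem sub_mul_deriv_lt_deriv_mul_sub (hmono : StrictMonoOn (fun x => f' x / g' x) (Ioo a b))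
    {x : ℝ} (hx : x ∈ Ioo a b) : (f x - fb) * g' x < f' x * (g x - gb) := by
  set m := f' x / g' x
  have hIco : Ico x b ⊆ Ioo a b := fun t ht => ⟨hx.1.trans_le ht.1, ht.2⟩
  have hsub : f x - m * g x < fb - m * gb := by
    refine lt_of_hasDerivAt_pos_of_tendsto_nhdsLT (φ := fun t => f t - m * g t) hx.2
      (fun t ht => (hf t (hIco ht)).sub ((hg t (hIco ht)).const_mul m))
      (fun t ht => ?_) (hfb.sub (hgb.const_mul m))
    have ht' : t ∈ Ioo a b := hIco (Ioo_subset_Ico_self ht)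
    exact sub_pos.2 ((lt_div_iff₀ (hg' t ht')).1 (hmono hx ht' ht.1))
  calc (f x - fb) * g' x < m * (g x - gb) * g' x :=
        mul_lt_mul_of_pos_right (by linarith) (hg' x hx)
    _ = f' x * (g x - gb) := by rw [mul_right_comm, div_mul_cancel₀ _ (hg' x hx).ne']

theorem strictMonoOn_div_sub_of_deriv_pos (hmono : StrictMonoOn (fun x => f' x / g' x) (Ioo a b)) :
    StrictMonoOn (fun x => (f x - fb) / (g x - gb)) (Ioo a b) := by
  have hgx : ∀ x ∈ Ioo a b, g x - gb ≠ 0 := fun x hx =>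
    (sub_neg.2 (lt_of_tendsto_nhdsLT_of_deriv_pos hg hg' hgb hx)).ne
  refine strictMonoOn_of_hasDerivAt_pos (convex_Ioo a b)
    (fun x hx => ((hf x hx).sub_const fb).div ((hg x hx).sub_const gb) (hgx x hx)) fun x hx => ?_
  rw [interior_Ioo] at hx
  exact div_pos (sub_pos.2 (sub_mul_deriv_lt_deriv_mul_sub hf hg hg' hfb hgb hmono hx))
    (pow_two_pos_of_ne_zero (hgx x hx))

end PositiveDerivative

theorem lhopital_monotone_right_increasing_general
    (a b : ℝ) (f g f' g' : ℝ → ℝ)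
    (hf : ∀ x ∈ Set.Ioo a b, HasDerivAt f (f' x) x)
    (hg : ∀ x ∈ Set.Ioo a b, HasDerivAt g (g' x) x)
    (hg' : (∀ x ∈ Set.Ioo a b, 0 < g' x) ∨ (∀ x ∈ Set.Ioo a b, g' x < 0))
    (hmono : StrictMonoOn (fun x => f' x / g' x) (Set.Ioo a b))
    (fb gb : ℝ)
    (hfb : Filter.Tendsto f (nhdsWithin b (Set.Iio b)) (nhds fb))
    (hgb : Filter.Tendsto g (nhdsWithin b (Set.Iio b)) (nhds gb)) :
    StrictMonoOn (fun x => (f x - fb) / (g x - gb)) (Set.Ioo a b) := by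
  rcases hg' with hpos | hneg
  · exact strictMonoOn_div_sub_of_deriv_pos hf hg hpos hfb hgb hmono
  · have h := strictMonoOn_div_sub_of_deriv_pos (f := -f) (g := -g) (f' := -f') (g' := -g')
      (fun x hx => (hf x hx).neg) (fun x hx => (hg x hx).neg)
      (fun x hx => neg_pos.2 (hneg x hx)) hfb.neg hgb.neg
      (by simpa only [Pi.neg_apply, neg_div_neg_eq] using hmono)
    simpa only [Pi.neg_apply, ← neg_sub', neg_div_neg_eq] using h

/-- L'Hôpital-type rule for monotonicity (right endpoint, increasing case). -/
theorem lhopital_monotone_right_increasing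
    (a b : ℝ) (hab : a < b) (f g f' g' : ℝ → ℝ)
    (hf : ∀ x ∈ Set.Ioo a b, HasDerivAt f (f' x) x)
    (hg : ∀ x ∈ Set.Ioo a b, HasDerivAt g (g' x) x)
    (hg' : (∀ x ∈ Set.Ioo a b, 0 < g' x) ∨ (∀ x ∈ Set.Ioo a b, g' x < 0))
    (hmono : StrictMonoOn (fun x => f' x / g' x) (Set.Ioo a b))
    (fb gb : ℝ)
    (hfb : Filter.Tendsto f (nhdsWithin b (Set.Iio b)) (nhds fb))
    (hgb : Filter.Tendsto g (nhdsWithin b (Set.Iio b)) (nhds gb)) :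
    StrictMonoOn (fun x => (f x - fb) / (g x - gb)) (Set.Ioo a b) :=
  lhopital_monotone_right_increasing_general a b f g f' g' hf hg hg' hmono fb gb hfb hgb
end

section
/- Let a < b be real numbers and let f and g be differentiable functions on the open interval (a,b). Suppose that either g'(x) > 0 for all x ∈ (a,b) or g'(x) < 0 for all x ∈ (a,b). If the function x ↦ f'(x)/g'(x) is strictly decreasing on (a,b) and the finite one-sided limits f(b⁻) and g(b⁻) exist, then the function x ↦ (f(x) − f(b⁻))/(g(x) − g(b⁻)) is strictly decreasing on (a,b). -/
open Set Filter

private lemma lhopital_aux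
    (a b : ℝ) (hab : a < b) (f g f' g' : ℝ → ℝ)
    (hf : ∀ x ∈ Set.Ioo a b, HasDerivAt f (f' x) x)
    (hg : ∀ x ∈ Set.Ioo a b, HasDerivAt g (g' x) x)
    (hg' : ∀ x ∈ Set.Ioo a b, 0 < g' x)
    (hanti : StrictAntiOn (fun x => f' x / g' x) (Set.Ioo a b))
    (fb gb : ℝ)
    (hfb : Filter.Tendsto f (nhdsWithin b (Set.Iio b)) (nhds fb))
    (hgb : Filter.Tendsto g (nhdsWithin b (Set.Iio b)) (nhds gb)) :
    StrictAntiOn (fun x => (f x - fb) / (g x - gb)) (Set.Ioo a b) := by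
  have hcf : ContinuousOn f (Ioo a b) := fun x hx => (hf x hx).continuousAt.continuousWithinAt
  have hcg : ContinuousOn g (Ioo a b) := fun x hx => (hg x hx).continuousAt.continuousWithinAt
  -- Cauchy mean value: for x < y inside (a,b), the ratio slope equals f'/g' at some c
  have cauchy : ∀ x ∈ Ioo a b, ∀ y ∈ Ioo a b, x < y →
      ∃ c ∈ Ioo x y, (g y - g x) * f' c = (f y - f x) * g' c := by
    intro x hx y hy hxy
    have hsub : Icc x y ⊆ Ioo a b := fun t ht => ⟨lt_of_lt_of_le hx.1 ht.1, lt_of_le_of_lt ht.2 hy.2⟩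
    have hsub' : Ioo x y ⊆ Ioo a b := fun t ht => ⟨hx.1.trans ht.1, ht.2.trans hy.2⟩
    exact exists_ratio_hasDerivAt_eq_ratio_slope f f' hxy (hcf.mono hsub)
      (fun t ht => hf t (hsub' ht)) g g' (hcg.mono hsub) (fun t ht => hg t (hsub' ht))
  -- g is strictly increasing
  have hgm : ∀ x ∈ Ioo a b, ∀ y ∈ Ioo a b, x < y → g x < g y := by
    intro x hx y hy hxy
    have hsub : Icc x y ⊆ Ioo a b := fun t ht => ⟨lt_of_lt_of_le hx.1 ht.1, lt_of_le_of_lt ht.2 hy.2⟩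
    have hsub' : Ioo x y ⊆ Ioo a b := fun t ht => ⟨hx.1.trans ht.1, ht.2.trans hy.2⟩
    obtain ⟨c, hc, hceq⟩ := exists_hasDerivAt_eq_slope g g' hxy (hcg.mono hsub)
      (fun t ht => hg t (hsub' ht))
    have h1 : 0 < g' c := hg' c (hsub' hc)
    have h2 : 0 < (g y - g x) / (y - x) := hceq ▸ h1
    have h3 : 0 < g y - g x := by
      have := mul_pos h2 (sub_pos.mpr hxy)
      rwa [div_mul_cancel₀] at this
      exact ne_of_gt (sub_pos.mpr hxy)
    linarith
  -- g x < gb for all x in (a,b)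
  have hlt : ∀ x ∈ Ioo a b, g x < gb := by
    intro x hx
    set m := (x + b) / 2 with hm
    have hxm : x < m := by simp [hm]; linarith [hx.2]
    have hmb : m < b := by simp [hm]; linarith [hx.2]
    have hmI : m ∈ Ioo a b := ⟨hx.1.trans hxm, hmb⟩
    have h1 : g x < g m := hgm x hx m hmI hxm
    have h2 : g m ≤ gb := by
      refine ge_of_tendsto hgb ?_
      filter_upwards [Ioo_mem_nhdsLT_of_mem (⟨hmb, le_refl b⟩ : b ∈ Ioc m b)] with t ht
      exact le_of_lt (hgm m hmI t ⟨hmI.1.trans ht.1, ht.2⟩ ht.1)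
    linarith
  -- key: fb - f y ≤ (f' y / g' y) * (gb - g y)
  have key : ∀ y ∈ Ioo a b, fb - f y ≤ (f' y / g' y) * (gb - g y) := by
    intro y hy
    set r := f' y / g' y with hr
    have hpt : ∀ t ∈ Ioo y b, f t - f y ≤ r * (g t - g y) := by
      intro t ht
      have htI : t ∈ Ioo a b := ⟨hy.1.trans ht.1, ht.2⟩
      obtain ⟨d, hd, hdeq⟩ := cauchy y hy t htI ht.1
      have hdI : d ∈ Ioo a b := ⟨hy.1.trans hd.1, hd.2.trans ht.2⟩
      have hgd : 0 < g' d := hg' d hdI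
      have hBpos : 0 < g t - g y := sub_pos.mpr (hgm y hy t htI ht.1)
      have hratio : f' d / g' d < r := hanti hy hdI hd.1
      have : f t - f y = (g t - g y) * (f' d / g' d) := by
        field_simp
        linarith [hdeq]
      rw [this]
      calc (g t - g y) * (f' d / g' d) ≤ (g t - g y) * r :=
            mul_le_mul_of_nonneg_left (le_of_lt hratio) (le_of_lt hBpos)
        _ = r * (g t - g y) := mul_comm _ _
    have h1 : Tendsto (fun t => f t - f y) (nhdsWithin b (Iio b)) (nhds (fb - f y)) :=
      hfb.sub_const _
    have h2 : Tendsto (fun t => r * (g t - g y)) (nhdsWithin b (Iio b))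
        (nhds (r * (gb - g y))) := (hgb.sub_const _).const_mul r
    refine le_of_tendsto_of_tendsto h1 h2 ?_
    filter_upwards [Ioo_mem_nhdsLT_of_mem (⟨hy.2, le_refl b⟩ : b ∈ Ioc y b)] with t ht
    exact hpt t ht
  -- main argument
  intro x hx y hy hxy
  obtain ⟨c, hc, hceq⟩ := cauchy x hx y hy hxy
  have hcI : c ∈ Ioo a b := ⟨hx.1.trans hc.1, hc.2.trans hy.2⟩
  set A := f y - f x with hA
  set B := g y - g x with hB
  set C := fb - f y with hC
  set D := gb - g y with hD
  have hBpos : 0 < B := sub_pos.mpr (hgm x hx y hy hxy)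
  have hDpos : 0 < D := sub_pos.mpr (hlt y hy)
  have hgc : 0 < g' c := hg' c hcI
  have hAeq : A = B * (f' c / g' c) := by
    field_simp
    linarith [hceq]
  have hry : f' y / g' y < f' c / g' c := hanti hcI hy hc.2
  have hkey : C ≤ (f' y / g' y) * D := key y hy
  have hmain : C * B < A * D := by
    calc C * B ≤ ((f' y / g' y) * D) * B := mul_le_mul_of_nonneg_right hkey (le_of_lt hBpos)
      _ < ((f' c / g' c) * D) * B := by
          apply mul_lt_mul_of_pos_right _ hBpos
          exact mul_lt_mul_of_pos_right hry hDpos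
      _ = A * D := by rw [hAeq]; ring
  -- rewrite the quotients
  have hx' : f x - fb = -(A + C) := by simp [hA, hC]
  have hx'' : g x - gb = -(B + D) := by simp [hB, hD]
  have hy' : f y - fb = -C := by simp [hC]
  have hy'' : g y - gb = -D := by simp [hD]
  simp only [hx', hx'', hy', hy'', neg_div_neg_eq]
  rw [div_lt_div_iff₀ hDpos (by linarith : (0:ℝ) < B + D)]
  nlinarith [hmain]

/-- L'Hôpital-type rule for monotonicity (right endpoint, decreasing case). -/
theorem lhopital_monotone_right_decreasing
    (a b : ℝ) (hab : a < b) (f g f' g' : ℝ → ℝ)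
    (hf : ∀ x ∈ Set.Ioo a b, HasDerivAt f (f' x) x)
    (hg : ∀ x ∈ Set.Ioo a b, HasDerivAt g (g' x) x)
    (hg' : (∀ x ∈ Set.Ioo a b, 0 < g' x) ∨ (∀ x ∈ Set.Ioo a b, g' x < 0))
    (hanti : StrictAntiOn (fun x => f' x / g' x) (Set.Ioo a b))
    (fb gb : ℝ)
    (hfb : Filter.Tendsto f (nhdsWithin b (Set.Iio b)) (nhds fb))
    (hgb : Filter.Tendsto g (nhdsWithin b (Set.Iio b)) (nhds gb)) :
    StrictAntiOn (fun x => (f x - fb) / (g x - gb)) (Set.Ioo a b) := by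
  rcases hg' with hpos | hneg
  · exact lhopital_aux a b hab f g f' g' hf hg hpos hanti fb gb hfb hgb
  · have h := lhopital_aux a b hab (fun t => -f t) (fun t => -g t)
      (fun t => -f' t) (fun t => -g' t)
      (fun x hx => (hf x hx).neg) (fun x hx => (hg x hx).neg)
      (fun x hx => by simpa using hneg x hx)
      (by
        have : (fun x => (-f' x) / (-g' x)) = fun x => f' x / g' x := by
          funext x; rw [neg_div_neg_eq]
        simpa [this] using hanti)
      (-fb) (-gb) hfb.neg hgb.neg
    have heq : (fun x => (-f x - -fb) / (-g x - -gb)) = fun x => (f x - fb) / (g x - gb) := by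
      funext x
      rw [show -f x - -fb = -(f x - fb) by ring, show -g x - -gb = -(g x - gb) by ring,
        neg_div_neg_eq]
    rwa [heq] at h
end

section
/- Let a < b be real numbers and let f, g : [a,b) → ℝ be continuous on [a,b) and differentiable on (a,b). Suppose that either g'(x) > 0 for all x ∈ (a,b) or g'(x) < 0 for all x ∈ (a,b). If the function x ↦ f'(x)/g'(x) is strictly increasing on (a,b), then the function x ↦ (f(x) − f(a))/(g(x) − g(a)) is strictly increasing on (a,b). (Note that g(x) ≠ g(a) for all x ∈ (a,b), since g is strictly monotone on [a,b).) -/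
lemma lhopital_monotone_aux
    (a b : ℝ) (f g f' g' : ℝ → ℝ)
    (hfc : ContinuousOn f (Set.Ico a b))
    (hgc : ContinuousOn g (Set.Ico a b))
    (hf : ∀ x ∈ Set.Ioo a b, HasDerivAt f (f' x) x)
    (hg : ∀ x ∈ Set.Ioo a b, HasDerivAt g (g' x) x)
    (hg' : ∀ x ∈ Set.Ioo a b, 0 < g' x)
    (hmono : StrictMonoOn (fun x => f' x / g' x) (Set.Ioo a b)) :
    StrictMonoOn (fun x => (f x - f a) / (g x - g a)) (Set.Ioo a b) := by
  -- g is strictly monotone on [a,b)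
  have gmono : StrictMonoOn g (Set.Ico a b) := by
    apply strictMonoOn_of_deriv_pos (convex_Ico a b) hgc
    intro z hz
    rw [interior_Ico] at hz
    rw [(hg z hz).deriv]
    exact hg' z hz
  intro x hx y hy hxy
  obtain ⟨hax, hxb⟩ := hx
  obtain ⟨hay, hyb⟩ := hy
  -- Cauchy MVT on [a,x]
  obtain ⟨ξ, hξ, hξeq⟩ := exists_ratio_hasDerivAt_eq_ratio_slope f f' hax
    (hfc.mono (Set.Icc_subset_Ico_right hxb))
    (fun z hz => hf z ⟨hz.1, hz.2.trans hxb⟩) g g'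
    (hgc.mono (Set.Icc_subset_Ico_right hxb))
    (fun z hz => hg z ⟨hz.1, hz.2.trans hxb⟩)
  -- Cauchy MVT on [x,y]
  obtain ⟨η, hη, hηeq⟩ := exists_ratio_hasDerivAt_eq_ratio_slope f f' hxy
    (hfc.mono (fun z hz => ⟨hax.le.trans hz.1, lt_of_le_of_lt hz.2 hyb⟩))
    (fun z hz => hf z ⟨hax.trans hz.1, hz.2.trans hyb⟩) g g'
    (hgc.mono (fun z hz => ⟨hax.le.trans hz.1, lt_of_le_of_lt hz.2 hyb⟩))
    (fun z hz => hg z ⟨hax.trans hz.1, hz.2.trans hyb⟩)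
  have hξab : ξ ∈ Set.Ioo a b := ⟨hξ.1, hξ.2.trans hxb⟩
  have hηab : η ∈ Set.Ioo a b := ⟨hax.trans hη.1, hη.2.trans hyb⟩
  have hgξ := hg' ξ hξab
  have hgη := hg' η hηab
  have hB : 0 < g x - g a := by
    have := gmono ⟨le_refl a, hax.trans hxb⟩ ⟨hax.le, hxb⟩ hax
    linarith
  have hD : 0 < g y - g x := by
    have := gmono ⟨hax.le, hxb⟩ ⟨hay.le, hyb⟩ hxy
    linarith
  have hratio : f' ξ / g' ξ < f' η / g' η :=
    hmono hξab hηab (hξ.2.trans hη.1)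
  -- A/B = f'ξ/g'ξ, C/D = f'η/g'η
  have h1 : (f x - f a) / (g x - g a) = f' ξ / g' ξ := by
    rw [div_eq_div_iff hB.ne' hgξ.ne']
    linarith [hξeq]
  have h2 : (f y - f x) / (g y - g x) = f' η / g' η := by
    rw [div_eq_div_iff hD.ne' hgη.ne']
    linarith [hηeq]
  have hAB : (f x - f a) / (g x - g a) < (f y - f x) / (g y - g x) := by
    rw [h1, h2]; exact hratio
  rw [div_lt_div_iff₀ hB hD] at hAB
  show (f x - f a) / (g x - g a) < (f y - f a) / (g y - g a)
  rw [div_lt_div_iff₀ hB (by linarith : (0:ℝ) < g y - g a)]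
  nlinarith

/-- Corollary 1: if `f, g` are continuous on `[a,b)`, differentiable on `(a,b)`,
`g'` has constant sign on `(a,b)`, and `f'/g'` is strictly increasing on `(a,b)`,
then `x ↦ (f x - f a) / (g x - g a)` is strictly increasing on `(a,b)`. -/
theorem lhopital_monotone_cont_left
    (a b : ℝ) (hab : a < b) (f g f' g' : ℝ → ℝ)
    (hfc : ContinuousOn f (Set.Ico a b))
    (hgc : ContinuousOn g (Set.Ico a b))
    (hf : ∀ x ∈ Set.Ioo a b, HasDerivAt f (f' x) x)
    (hg : ∀ x ∈ Set.Ioo a b, HasDerivAt g (g' x) x)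
    (hg' : (∀ x ∈ Set.Ioo a b, 0 < g' x) ∨ (∀ x ∈ Set.Ioo a b, g' x < 0))
    (hmono : StrictMonoOn (fun x => f' x / g' x) (Set.Ioo a b)) :
    StrictMonoOn (fun x => (f x - f a) / (g x - g a)) (Set.Ioo a b) := by
  rcases hg' with hpos | hneg
  · exact lhopital_monotone_aux a b f g f' g' hfc hgc hf hg hpos hmono
  · have key := lhopital_monotone_aux a b (fun t => -f t) (fun t => -g t)
      (fun t => -f' t) (fun t => -g' t) hfc.neg hgc.neg
      (fun z hz => (hf z hz).neg) (fun z hz => (hg z hz).neg)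
      (fun z hz => by simpa using hneg z hz)
      (by
        have : (fun x => (-f' x) / (-g' x)) = fun x => f' x / g' x := by
          funext x; rw [neg_div_neg_eq]
        rw [this]; exact hmono)
    have : (fun x => (-f x - -f a) / (-g x - -g a))
        = fun x => (f x - f a) / (g x - g a) := by
      funext x
      rw [show -f x - -f a = -(f x - f a) by ring,
          show -g x - -g a = -(g x - g a) by ring, neg_div_neg_eq]
    rwa [this] at key
end

section
/- Let a < b be real numbers and let f, g : (a,b] → ℝ be continuous on (a,b] and differentiable on (a,b). Suppose that either g'(x) > 0 for all x ∈ (a,b) or g'(x) < 0 for all x ∈ (a,b). If the function x ↦ f'(x)/g'(x) is strictly increasing on (a,b), then the function x ↦ (f(x) − f(b))/(g(x) − g(b)) is strictly increasing on (a,b). (Note that g(x) ≠ g(b) for all x ∈ (a,b), since g is strictly monotone on (a,b].) -/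
/-- Corollary 2: if `f, g` are continuous on `(a,b]`, differentiable on `(a,b)`,
`g'` has constant sign on `(a,b)`, and `f'/g'` is strictly increasing on `(a,b)`,
then `x ↦ (f x - f b) / (g x - g b)` is strictly increasing on `(a,b)`. -/
theorem lhopital_monotone_cont_right
    (a b : ℝ) (hab : a < b) (f g f' g' : ℝ → ℝ)
    (hfc : ContinuousOn f (Set.Ioc a b))
    (hgc : ContinuousOn g (Set.Ioc a b))
    (hf : ∀ x ∈ Set.Ioo a b, HasDerivAt f (f' x) x)
    (hg : ∀ x ∈ Set.Ioo a b, HasDerivAt g (g' x) x)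
    (hg' : (∀ x ∈ Set.Ioo a b, 0 < g' x) ∨ (∀ x ∈ Set.Ioo a b, g' x < 0))
    (hmono : StrictMonoOn (fun x => f' x / g' x) (Set.Ioo a b)) :
    StrictMonoOn (fun x => (f x - f b) / (g x - g b)) (Set.Ioo a b) := by
  have gne : ∀ c ∈ Set.Ioo a b, g' c ≠ 0 := by
    rcases hg' with h | h
    · exact fun c hc => ne_of_gt (h c hc)
    · exact fun c hc => ne_of_lt (h c hc)
  -- subsets
  have hsub : ∀ u v : ℝ, a < u → v ≤ b → Set.Icc u v ⊆ Set.Ioc a b := by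
    intro u v hu hv z hz
    exact ⟨lt_of_lt_of_le hu hz.1, le_trans hz.2 hv⟩
  have hsub' : ∀ u v : ℝ, a < u → v ≤ b → Set.Ioo u v ⊆ Set.Ioo a b := by
    intro u v hu hv z hz
    exact ⟨lt_trans hu hz.1, lt_of_lt_of_le hz.2 hv⟩
  -- sign of g v - g u
  have gsgn : ∀ u v : ℝ, a < u → u < v → v ≤ b →
      ∃ c ∈ Set.Ioo a b, g v - g u = g' c * (v - u) := by
    intro u v hu huv hv
    obtain ⟨c, hc, hceq⟩ := exists_hasDerivAt_eq_slope g g' huv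
      (hgc.mono (hsub u v hu hv)) (fun z hz => hg z (hsub' u v hu hv hz))
    have hvu : v - u ≠ 0 := by linarith
    refine ⟨c, hsub' u v hu hv hc, ?_⟩
    rw [hceq, div_mul_cancel₀ _ hvu]
  -- Cauchy MVT ratio form
  have cauchy : ∀ u v : ℝ, a < u → u < v → v ≤ b →
      ∃ c ∈ Set.Ioo u v, (f v - f u) / (g v - g u) = f' c / g' c := by
    intro u v hu huv hv
    obtain ⟨c, hc, hceq⟩ := exists_ratio_hasDerivAt_eq_ratio_slope f f' huv
      (hfc.mono (hsub u v hu hv)) (fun z hz => hf z (hsub' u v hu hv hz))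
      g g' (hgc.mono (hsub u v hu hv)) (fun z hz => hg z (hsub' u v hu hv hz))
    have hcm := hsub' u v hu hv hc
    have hgsub : g v - g u ≠ 0 := by
      obtain ⟨d, hd, hdeq⟩ := gsgn u v hu huv hv
      rw [hdeq]
      exact mul_ne_zero (gne d hd) (by linarith : v - u ≠ 0)
    refine ⟨c, hc, ?_⟩
    rw [div_eq_div_iff hgsub (gne c hcm)]
    linarith [hceq]
  intro x hx y hy hxy
  simp only
  set A := g y - g x with hA
  set B := g b - g y with hB
  obtain ⟨d, hd, hdeq⟩ := cauchy x y hx.1 hxy (le_of_lt hy.2)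
  obtain ⟨c, hc, hceq⟩ := cauchy y b hy.1 hy.2 le_rfl
  have hdm : d ∈ Set.Ioo a b := hsub' x y hx.1 (le_of_lt hy.2) hd
  have hcm : c ∈ Set.Ioo a b := hsub' y b hy.1 le_rfl hc
  have hdc : d < c := lt_trans hd.2 hc.1
  have hr : f' d / g' d < f' c / g' c := hmono hdm hcm hdc
  set r1 := f' d / g' d with hr1
  set r2 := f' c / g' c with hr2
  -- signs of A and B
  obtain ⟨p, hp, hpA⟩ := gsgn x y hx.1 hxy (le_of_lt hy.2)
  obtain ⟨q, hq, hqB⟩ := gsgn y b hy.1 hy.2 le_rfl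
  have hAB : (0 < A ∧ 0 < B) ∨ (A < 0 ∧ B < 0) := by
    rcases hg' with h | h
    · left
      constructor
      · rw [hA, hpA]; exact mul_pos (h p hp) (by linarith)
      · rw [hB, hqB]; exact mul_pos (h q hq) (by linarith [hy.2])
    · right
      constructor
      · rw [hA, hpA]; exact mul_neg_of_neg_of_pos (h p hp) (by linarith)
      · rw [hB, hqB]; exact mul_neg_of_neg_of_pos (h q hq) (by linarith [hy.2])
  have hAne : A ≠ 0 := by rcases hAB with ⟨h1, _⟩ | ⟨h1, _⟩ <;> [exact ne_of_gt h1; exact ne_of_lt h1]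
  have hBne : B ≠ 0 := by rcases hAB with ⟨_, h2⟩ | ⟨_, h2⟩ <;> [exact ne_of_gt h2; exact ne_of_lt h2]
  -- f increments
  have hAne0 : g y - g x ≠ 0 := hA ▸ hAne
  have hBne0 : g b - g y ≠ 0 := hB ▸ hBne
  have hfy : f y - f x = r1 * A := by
    rw [← hdeq, hA, div_mul_cancel₀ _ hAne0]
  have hfb : f b - f y = r2 * B := by
    rw [← hceq, hB, div_mul_cancel₀ _ hBne0]
  -- rewrite goal
  have hgx : g x - g b = -(A + B) := by rw [hA, hB]; ring
  have hgy : g y - g b = -B := by rw [hB]; ring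
  have hfx : f x - f b = -(r1 * A + r2 * B) := by
    have : f b - f x = r1 * A + r2 * B := by linarith
    linarith
  have hfyb : f y - f b = -(r2 * B) := by linarith
  rw [hgx, hgy, hfx, hfyb, neg_div_neg_eq, neg_div_neg_eq]
  have hB' : r2 * B / B = r2 := by field_simp
  rw [hB']
  rcases hAB with ⟨h1, h2⟩ | ⟨h1, h2⟩
  · rw [div_lt_iff₀ (by linarith)]
    nlinarith
  · rw [div_lt_iff_of_neg (by linarith)]
    nlinarith
end

section
/- Let a < b be real numbers and let f and g be differentiable functions on the open interval (a,b). Suppose that either g'(x) > 0 for all x ∈ (a,b) or g'(x) < 0 for all x ∈ (a,b). Suppose also that either f(a⁺) = g(a⁺) = 0 or f(b⁻) = g(b⁻) = 0 (in particular these one-sided limits exist). If the function x ↦ f'(x)/g'(x) is strictly increasing on (a,b), then the function x ↦ f(x)/g(x) is strictly increasing on (a,b). (Note that g(x) ≠ 0 for all x ∈ (a,b), since g is strictly monotone on (a,b) with limit 0 at the relevant endpoint.) -/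
/-!
Wherever `g x ≠ 0`, the derivative of `f / g` factors as `(g' / g) * (f' / g' - f / g)`.
Cauchy's mean value theorem on `(a, x)` (resp. `(x, b)`), using the zero limits at the endpoint,
gives `f x / g x = f' c / g' c` for some `c < x` (resp. `c > x`), so the second factor is positive
(resp. negative) because `f' / g'` is strictly increasing. The same theorem applied to `g` and
`y ↦ y - a` (resp. `y ↦ y - b`) shows that `g` has the sign of `g'` (resp. the opposite sign),
so the first factor has the same sign as the second and the derivative of `f / g` is positive.
-/

open Set Filter Topology

section

variable {f g f' g' : ℝ → ℝ} {a b x : ℝ}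

theorem strictMonoOn_div_of_factored_deriv_pos
    (hf : ∀ x ∈ Ioo a b, HasDerivAt f (f' x) x) (hg : ∀ x ∈ Ioo a b, HasDerivAt g (g' x) x)
    (hpos : ∀ x ∈ Ioo a b, 0 < g' x / g x * (f' x / g' x - f x / g x)) :
    StrictMonoOn (fun x => f x / g x) (Ioo a b) := by
  -- positivity of the product rules out the junk values `g x = 0` and `g' x = 0`
  have hne : ∀ x ∈ Ioo a b, g x ≠ 0 ∧ g' x ≠ 0 := fun x hx => by
    have h := hpos x hx
    refine ⟨fun h0 => ?_, fun h0 => ?_⟩ <;> simp [h0] at h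
  have hderiv : ∀ x ∈ Ioo a b, HasDerivAt (fun y => f y / g y)
      (g' x / g x * (f' x / g' x - f x / g x)) x := fun x hx => by
    refine ((hf x hx).div (hg x hx) (hne x hx).1).congr_deriv ?_
    field_simp [(hne x hx).1, (hne x hx).2]
  refine strictMonoOn_of_deriv_pos (convex_Ioo a b)
    (fun x hx => (hderiv x hx).continuousAt.continuousWithinAt) fun x hx => ?_
  rw [interior_Ioo] at hx
  rw [(hderiv x hx).deriv]
  exact hpos x hx

theorem exists_ratio_hasDerivAt_eq_ratio_of_tendsto_nhdsGT
    (hf : ∀ x ∈ Ioo a b, HasDerivAt f (f' x) x) (hg : ∀ x ∈ Ioo a b, HasDerivAt g (g' x) x)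
    (hfa : Tendsto f (𝓝[>] a) (𝓝 0)) (hga : Tendsto g (𝓝[>] a) (𝓝 0)) (hx : x ∈ Ioo a b) :
    ∃ c ∈ Ioo a x, g x * f' c = f x * g' c := by
  have hsub : Ioo a x ⊆ Ioo a b := Ioo_subset_Ioo_right hx.2.le
  simpa only [sub_zero] using exists_ratio_hasDerivAt_eq_ratio_slope' f f' hx.1 g g'
    (fun y hy => hf y (hsub hy)) (fun y hy => hg y (hsub hy)) hfa hga
    (hf x hx).continuousAt.continuousWithinAt.tendsto
    (hg x hx).continuousAt.continuousWithinAt.tendsto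

theorem exists_ratio_hasDerivAt_eq_ratio_of_tendsto_nhdsLT
    (hf : ∀ x ∈ Ioo a b, HasDerivAt f (f' x) x) (hg : ∀ x ∈ Ioo a b, HasDerivAt g (g' x) x)
    (hfb : Tendsto f (𝓝[<] b) (𝓝 0)) (hgb : Tendsto g (𝓝[<] b) (𝓝 0)) (hx : x ∈ Ioo a b) :
    ∃ c ∈ Ioo x b, g x * f' c = f x * g' c := by
  have hsub : Ioo x b ⊆ Ioo a b := Ioo_subset_Ioo_left hx.1.le
  obtain ⟨c, hc, h⟩ := exists_ratio_hasDerivAt_eq_ratio_slope' f f' hx.2 g g'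
    (fun y hy => hf y (hsub hy)) (fun y hy => hg y (hsub hy))
    (hf x hx).continuousAt.continuousWithinAt.tendsto
    (hg x hx).continuousAt.continuousWithinAt.tendsto hfb hgb
  exact ⟨c, hc, by linarith⟩

theorem deriv_div_self_pos_of_tendsto_nhdsGT (hg : ∀ x ∈ Ioo a b, HasDerivAt g (g' x) x)
    (hg' : ∀ x ∈ Ioo a b, ∀ y ∈ Ioo a b, 0 < g' x * g' y) (hga : Tendsto g (𝓝[>] a) (𝓝 0))
    (hx : x ∈ Ioo a b) : 0 < g' x / g x := by
  obtain ⟨c, hc, h⟩ := exists_ratio_hasDerivAt_eq_ratio_of_tendsto_nhdsGT hg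
    (fun y _ => (hasDerivAt_id' y).sub_const a) hga
    (tendsto_nhdsWithin_of_tendsto_nhds (tendsto_sub_nhds_zero_iff.2 tendsto_id)) hx
  have hgx : g x = (x - a) * g' c := by linarith
  rw [div_pos_iff, ← mul_pos_iff, hgx, mul_left_comm]
  exact mul_pos (sub_pos.2 hx.1) (hg' x hx c ⟨hc.1, hc.2.trans hx.2⟩)

theorem deriv_div_self_neg_of_tendsto_nhdsLT (hg : ∀ x ∈ Ioo a b, HasDerivAt g (g' x) x)
    (hg' : ∀ x ∈ Ioo a b, ∀ y ∈ Ioo a b, 0 < g' x * g' y) (hgb : Tendsto g (𝓝[<] b) (𝓝 0))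
    (hx : x ∈ Ioo a b) : g' x / g x < 0 := by
  obtain ⟨c, hc, h⟩ := exists_ratio_hasDerivAt_eq_ratio_of_tendsto_nhdsLT hg
    (fun y _ => (hasDerivAt_id' y).sub_const b) hgb
    (tendsto_nhdsWithin_of_tendsto_nhds (tendsto_sub_nhds_zero_iff.2 tendsto_id)) hx
  have hgx : g x = (x - b) * g' c := by linarith
  rw [div_neg_iff, ← mul_neg_iff, hgx, mul_left_comm]
  exact mul_neg_of_neg_of_pos (sub_neg.2 hx.2) (hg' x hx c ⟨hx.1.trans hc.1, hc.2⟩)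

end

theorem lhopital_monotone_zero_limits_general
    (a b : ℝ) (f g f' g' : ℝ → ℝ)
    (hf : ∀ x ∈ Set.Ioo a b, HasDerivAt f (f' x) x)
    (hg : ∀ x ∈ Set.Ioo a b, HasDerivAt g (g' x) x)
    (hg' : (∀ x ∈ Set.Ioo a b, 0 < g' x) ∨ (∀ x ∈ Set.Ioo a b, g' x < 0))
    (hlim : (Filter.Tendsto f (nhdsWithin a (Set.Ioi a)) (nhds 0) ∧
             Filter.Tendsto g (nhdsWithin a (Set.Ioi a)) (nhds 0)) ∨
            (Filter.Tendsto f (nhdsWithin b (Set.Iio b)) (nhds 0) ∧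
             Filter.Tendsto g (nhdsWithin b (Set.Iio b)) (nhds 0)))
    (hmono : StrictMonoOn (fun x => f' x / g' x) (Set.Ioo a b)) :
    StrictMonoOn (fun x => f x / g x) (Set.Ioo a b) := by
  have hsign : ∀ x ∈ Ioo a b, ∀ y ∈ Ioo a b, 0 < g' x * g' y := by
    rcases hg' with hpos | hneg
    · exact fun x hx y hy => mul_pos (hpos x hx) (hpos y hy)
    · exact fun x hx y hy => mul_pos_of_neg_of_neg (hneg x hx) (hneg y hy)
  have hratio : ∀ x, ∀ c ∈ Ioo a b, g x ≠ 0 → g x * f' c = f x * g' c →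
      f x / g x = f' c / g' c := fun x c hc hgx h =>
    (div_eq_div_iff hgx (mul_self_pos.1 (hsign c hc c hc))).2 (by linarith)
  refine strictMonoOn_div_of_factored_deriv_pos hf hg fun x hx => ?_
  rcases hlim with ⟨hfa, hga⟩ | ⟨hfb, hgb⟩
  · have hq := deriv_div_self_pos_of_tendsto_nhdsGT hg hsign hga hx
    obtain ⟨c, hc, h⟩ := exists_ratio_hasDerivAt_eq_ratio_of_tendsto_nhdsGT hf hg hfa hga hx
    have hcab : c ∈ Ioo a b := ⟨hc.1, hc.2.trans hx.2⟩
    rw [hratio x c hcab (div_ne_zero_iff.1 hq.ne').2 h]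
    exact mul_pos hq (sub_pos.2 (hmono hcab hx hc.2))
  · have hq := deriv_div_self_neg_of_tendsto_nhdsLT hg hsign hgb hx
    obtain ⟨c, hc, h⟩ := exists_ratio_hasDerivAt_eq_ratio_of_tendsto_nhdsLT hf hg hfb hgb hx
    have hcab : c ∈ Ioo a b := ⟨hx.1.trans hc.1, hc.2⟩
    rw [hratio x c hcab (div_ne_zero_iff.1 hq.ne).2 h]
    exact mul_pos_of_neg_of_neg hq (sub_neg.2 (hmono hx hcab hc.1))

/-- Corollary 3: if `f, g` are differentiable on `(a,b)`, `g'` has constant sign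
on `(a,b)`, `f'/g'` is strictly increasing on `(a,b)`, and either
`f(a⁺) = g(a⁺) = 0` or `f(b⁻) = g(b⁻) = 0`, then `f/g` is strictly increasing
on `(a,b)`. -/
theorem lhopital_monotone_zero_limits
    (a b : ℝ) (hab : a < b) (f g f' g' : ℝ → ℝ)
    (hf : ∀ x ∈ Set.Ioo a b, HasDerivAt f (f' x) x)
    (hg : ∀ x ∈ Set.Ioo a b, HasDerivAt g (g' x) x)
    (hg' : (∀ x ∈ Set.Ioo a b, 0 < g' x) ∨ (∀ x ∈ Set.Ioo a b, g' x < 0))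
    (hlim : (Filter.Tendsto f (nhdsWithin a (Set.Ioi a)) (nhds 0) ∧
             Filter.Tendsto g (nhdsWithin a (Set.Ioi a)) (nhds 0)) ∨
            (Filter.Tendsto f (nhdsWithin b (Set.Iio b)) (nhds 0) ∧
             Filter.Tendsto g (nhdsWithin b (Set.Iio b)) (nhds 0)))
    (hmono : StrictMonoOn (fun x => f' x / g' x) (Set.Ioo a b)) :
    StrictMonoOn (fun x => f x / g x) (Set.Ioo a b) :=
  lhopital_monotone_zero_limits_general a b f g f' g' hf hg hg' hlim hmono
end

section
/- Discrete delta-monotone l'Hôpital rule (left endpoint, increasing case): let a, b ∈ ℤ with a + 1 < b and let f, g : ℤ → ℝ. Suppose that either Δg(n) > 0 for all integers n with a ≤ n ≤ b − 2, or Δg(n) < 0 for all such n. If the function n ↦ Δf(n)/Δg(n) is strictly increasing on the integers n with a ≤ n ≤ b − 2, then the function n ↦ (f(n) − f(a))/(g(n) − g(a)) is strictly increasing on the integers n with a + 1 ≤ n ≤ b − 1. (Note that g(n) ≠ g(a) for a + 1 ≤ n ≤ b − 1, since g is strictly monotone on {a, …, b − 1}.) -/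
private lemma aux_lhopital (a b : ℤ) (hab : a + 1 < b) (f g : ℤ → ℝ)
    (hg : ∀ n ∈ Set.Icc a (b - 2), 0 < g (n + 1) - g n)
    (hmono : StrictMonoOn (fun n => (f (n + 1) - f n) / (g (n + 1) - g n))
      (Set.Icc a (b - 2))) :
    StrictMonoOn (fun n => (f n - f a) / (g n - g a))
      (Set.Icc (a + 1) (b - 1)) := by
  -- key1: cumulative ratio bounded by last increment ratio
  have key1 : ∀ n, a ≤ n → n ≤ b - 2 →
      0 < g (n + 1) - g a ∧
      (f (n + 1) - f a) / (g (n + 1) - g a) ≤ (f (n + 1) - f n) / (g (n + 1) - g n) := by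
    refine Int.le_induction ?_ ?_
    · intro hb
      exact ⟨hg a ⟨le_refl a, hb⟩, le_of_eq rfl⟩
    · intro n hn ih hb
      have hnb : n ≤ b - 2 := by omega
      obtain ⟨hGpos, hle⟩ := ih hnb
      have hdg : 0 < g (n + 1 + 1) - g (n + 1) := hg (n + 1) ⟨by omega, hb⟩
      have hG2 : 0 < g (n + 1 + 1) - g a := by linarith
      refine ⟨hG2, ?_⟩
      have hr : (f (n + 1) - f n) / (g (n + 1) - g n) <
          (f (n + 1 + 1) - f (n + 1)) / (g (n + 1 + 1) - g (n + 1)) :=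
        hmono ⟨hn, hnb⟩ ⟨by omega, hb⟩ (by omega)
      -- both pieces are ≤ ratio at n+1
      set R := (f (n + 1 + 1) - f (n + 1)) / (g (n + 1 + 1) - g (n + 1)) with hR
      have h1 : f (n + 1) - f a ≤ R * (g (n + 1) - g a) := by
        have := hle.trans hr.le
        rwa [div_le_iff₀ hGpos] at this
      have h2 : f (n + 1 + 1) - f (n + 1) ≤ R * (g (n + 1 + 1) - g (n + 1)) := by
        rw [hR, div_mul_cancel₀]
        exact ne_of_gt hdg
      rw [div_le_iff₀ hG2]
      nlinarith
  -- key2: consecutive increase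
  have key2 : ∀ n, a + 1 ≤ n → n ≤ b - 2 →
      (f n - f a) / (g n - g a) < (f (n + 1) - f a) / (g (n + 1) - g a) := by
    intro n hn1 hn2
    obtain ⟨hGpos, hle⟩ := key1 (n - 1) (by omega) (by omega)
    rw [show n - 1 + 1 = n by ring] at hGpos hle
    have hr : (f (n - 1 + 1) - f (n - 1)) / (g (n - 1 + 1) - g (n - 1)) <
        (f (n + 1) - f n) / (g (n + 1) - g n) :=
      hmono ⟨by omega, by omega⟩ ⟨by omega, hn2⟩ (by omega)
    rw [show n - 1 + 1 = n by ring] at hr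
    have hlt : (f n - f a) / (g n - g a) < (f (n + 1) - f n) / (g (n + 1) - g n) :=
      lt_of_le_of_lt hle hr
    have hdg : 0 < g (n + 1) - g n := hg n ⟨by omega, hn2⟩
    have hG2 : 0 < g (n + 1) - g a := by linarith
    rw [div_lt_div_iff₀ hGpos hdg] at hlt
    rw [div_lt_div_iff₀ hGpos hG2]
    nlinarith
  intro x hx y hy hxy
  simp only [Set.mem_Icc] at hx hy
  have : ∀ z, x + 1 ≤ z → z ≤ b - 1 →
      (f x - f a) / (g x - g a) < (f z - f a) / (g z - g a) := by
    refine Int.le_induction ?_ ?_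
    · intro hb; exact key2 x hx.1 (by omega)
    · intro z hz ih hb
      exact (ih (by omega)).trans (key2 z (by omega) (by omega))
  exact this y (by omega) hy.2

/-- Discrete delta-monotone l'Hôpital rule (left endpoint, increasing case),
with forward difference `Δf n = f (n+1) - f n`. -/
theorem discrete_lhopital_left_increasing
    (a b : ℤ) (hab : a + 1 < b) (f g : ℤ → ℝ)
    (hg : (∀ n ∈ Set.Icc a (b - 2), 0 < g (n + 1) - g n) ∨
          (∀ n ∈ Set.Icc a (b - 2), g (n + 1) - g n < 0))
    (hmono : StrictMonoOn (fun n => (f (n + 1) - f n) / (g (n + 1) - g n))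
      (Set.Icc a (b - 2))) :
    StrictMonoOn (fun n => (f n - f a) / (g n - g a))
      (Set.Icc (a + 1) (b - 1)) := by
  rcases hg with hg | hg
  · exact aux_lhopital a b hab f g hg hmono
  · have key := aux_lhopital a b hab (fun n => -f n) (fun n => -g n)
      (by intro n hn; have := hg n hn; simp; linarith)
      (by
        convert hmono using 2 with n
        rw [show -f (n + 1) - -f n = -(f (n + 1) - f n) by ring,
          show -g (n + 1) - -g n = -(g (n + 1) - g n) by ring, neg_div_neg_eq])
    convert key using 2 with n
    rw [show -f n - -f a = -(f n - f a) by ring,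
      show -g n - -g a = -(g n - g a) by ring, neg_div_neg_eq]
end

section
/- Discrete delta-monotone l'Hôpital rule (left endpoint, decreasing case): let a, b ∈ ℤ with a + 1 < b and let f, g : ℤ → ℝ. Suppose that either Δg(n) > 0 for all integers n with a ≤ n ≤ b − 2, or Δg(n) < 0 for all such n. If the function n ↦ Δf(n)/Δg(n) is strictly decreasing on the integers n with a ≤ n ≤ b − 2, then the function n ↦ (f(n) − f(a))/(g(n) − g(a)) is strictly decreasing on the integers n with a + 1 ≤ n ≤ b − 1. -/
/-!
Write `F n = f n - f a`, `G n = g n - g a` and assume `Δg > 0` (otherwise pass to `-f, -g`).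
Then `F (n+1) / G (n+1)` is the mediant of `F n / G n` and `Δf n / Δg n`, hence lies strictly
between them once `Δf n / Δg n < F n / G n`. That inequality holds by induction: at `n = a + 1`
the right side is `Δf a / Δg a`, and the mediant step keeps `F / G` above `Δf n / Δg n`, which
exceeds `Δf (n+1) / Δg (n+1)`. The other half of the mediant step is the claimed decrease.
-/

open Set

theorem add_div_add_mem_Ioo {K : Type*} [Field K] [LinearOrder K] [IsStrictOrderedRing K]
    {a b c d : K} (hb : 0 < b) (hd : 0 < d) (h : c / d < a / b) :
    (a + c) / (b + d) ∈ Ioo (c / d) (a / b) := by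
  rw [div_lt_div_iff₀ hd hb] at h
  constructor
  · rw [div_lt_div_iff₀ hd (add_pos hb hd)]
    linarith
  · rw [div_lt_div_iff₀ (add_pos hb hd) hb]
    linarith

namespace Int

theorem strictMonoOn_Icc_of_lt_add_one {α : Type*} [Preorder α] {φ : ℤ → α} {a b : ℤ}
    (h : ∀ n, a ≤ n → n < b → φ n < φ (n + 1)) : StrictMonoOn φ (Icc a b) :=
  strictMonoOn_of_lt_succ ordConnected_Icc fun n _ hn hn1 => by
    rw [Order.succ_eq_add_one] at hn1 ⊢
    exact h n hn.1 (by linarith [hn1.2])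

theorem strictAntiOn_Icc_of_add_one_lt {α : Type*} [Preorder α] {φ : ℤ → α} {a b : ℤ}
    (h : ∀ n, a ≤ n → n < b → φ (n + 1) < φ n) : StrictAntiOn φ (Icc a b) :=
  strictMonoOn_Icc_of_lt_add_one (α := αᵒᵈ) h

end Int

section DeltaPositive

variable {f g : ℤ → ℝ} {a b : ℤ}

theorem secant_ratio_step {n : ℤ} (hG : 0 < g n - g a) (hΔ : 0 < g (n + 1) - g n)
    (h : (f (n + 1) - f n) / (g (n + 1) - g n) < (f n - f a) / (g n - g a)) :
    (f (n + 1) - f a) / (g (n + 1) - g a) ∈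
      Ioo ((f (n + 1) - f n) / (g (n + 1) - g n)) ((f n - f a) / (g n - g a)) := by
  simpa only [sub_add_sub_cancel'] using add_div_add_mem_Ioo hG hΔ h

variable (hg : ∀ n ∈ Icc a (b - 2), 0 < g (n + 1) - g n)
  (hanti : StrictAntiOn (fun n => (f (n + 1) - f n) / (g (n + 1) - g n)) (Icc a (b - 2)))
include hg

theorem sub_pos_of_delta_pos {n : ℤ} (hn : n ∈ Icc (a + 1) (b - 1)) : 0 < g n - g a := by
  obtain ⟨han, hnb⟩ := hn
  have hmono : StrictMonoOn g (Icc a (b - 1)) :=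
    Int.strictMonoOn_Icc_of_lt_add_one fun k hak hkb => sub_pos.1 (hg k ⟨hak, by omega⟩)
  exact sub_pos.2 (hmono ⟨le_rfl, by omega⟩ ⟨by omega, hnb⟩ (by omega))

include hanti

theorem delta_ratio_lt_secant_ratio {n : ℤ} (hn : n ∈ Icc (a + 1) (b - 2)) :
    (f (n + 1) - f n) / (g (n + 1) - g n) < (f n - f a) / (g n - g a) := by
  obtain ⟨han, hnb⟩ := hn
  induction n, han using Int.leInduction with
  | base =>
    have hab : a ≤ b - 2 := by omega
    simpa only [add_sub_cancel_left] using hanti ⟨le_rfl, hab⟩ ⟨by omega, hnb⟩ (by omega)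
  | succ n han ih =>
    have hstep := secant_ratio_step (sub_pos_of_delta_pos hg ⟨han, by omega⟩)
      (hg n ⟨by omega, by omega⟩) (ih (by omega))
    exact (hanti ⟨by omega, by omega⟩ ⟨by omega, hnb⟩ (by omega)).trans hstep.1

theorem strictAntiOn_secant_ratio_of_delta_pos :
    StrictAntiOn (fun n => (f n - f a) / (g n - g a)) (Icc (a + 1) (b - 1)) :=
  Int.strictAntiOn_Icc_of_add_one_lt fun n han hnb =>
    (secant_ratio_step (sub_pos_of_delta_pos hg ⟨han, by omega⟩) (hg n ⟨by omega, by omega⟩)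
      (delta_ratio_lt_secant_ratio hg hanti ⟨han, by omega⟩)).2

end DeltaPositive

theorem discrete_lhopital_left_decreasing_general
    (a b : ℤ) (f g : ℤ → ℝ)
    (hg : (∀ n ∈ Set.Icc a (b - 2), 0 < g (n + 1) - g n) ∨
          (∀ n ∈ Set.Icc a (b - 2), g (n + 1) - g n < 0))
    (hanti : StrictAntiOn (fun n => (f (n + 1) - f n) / (g (n + 1) - g n))
      (Set.Icc a (b - 2))) :
    StrictAntiOn (fun n => (f n - f a) / (g n - g a))
      (Set.Icc (a + 1) (b - 1)) := by
  rcases hg with hpos | hneg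
  · exact strictAntiOn_secant_ratio_of_delta_pos hpos hanti
  · have hpos : ∀ n ∈ Icc a (b - 2), 0 < -g (n + 1) - -g n := fun n hn => by
      linarith [hneg n hn]
    have neg_ratio : ∀ x y u v : ℝ, (-x - -y) / (-u - -v) = (x - y) / (u - v) :=
      fun x y u v => by rw [← neg_sub' x, ← neg_sub' u, neg_div_neg_eq]
    simpa only [neg_ratio] using
      strictAntiOn_secant_ratio_of_delta_pos (f := fun n => -f n) (g := fun n => -g n) hpos
        (by simpa only [neg_ratio] using hanti)

/-- Discrete delta-monotone l'Hôpital rule (left endpoint, decreasing case),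
with forward difference `Δf n = f (n+1) - f n`. -/
theorem discrete_lhopital_left_decreasing
    (a b : ℤ) (hab : a + 1 < b) (f g : ℤ → ℝ)
    (hg : (∀ n ∈ Set.Icc a (b - 2), 0 < g (n + 1) - g n) ∨
          (∀ n ∈ Set.Icc a (b - 2), g (n + 1) - g n < 0))
    (hanti : StrictAntiOn (fun n => (f (n + 1) - f n) / (g (n + 1) - g n))
      (Set.Icc a (b - 2))) :
    StrictAntiOn (fun n => (f n - f a) / (g n - g a))
      (Set.Icc (a + 1) (b - 1)) :=
  discrete_lhopital_left_decreasing_general a b f g hg hanti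
end

section
/- Discrete delta-monotone l'Hôpital rule (right endpoint, increasing case): let a, b ∈ ℤ with a + 1 < b and let f, g : ℤ → ℝ. Suppose that either Δg(n) > 0 for all integers n with a ≤ n ≤ b − 1, or Δg(n) < 0 for all such n. If the function n ↦ Δf(n)/Δg(n) is strictly increasing on the integers n with a ≤ n ≤ b − 1, then the function n ↦ (f(n) − f(b))/(g(n) − g(b)) is strictly increasing on the integers n with a ≤ n ≤ b − 1. (Note that g(n) ≠ g(b) for a ≤ n ≤ b − 1, since g is strictly monotone on {a, …, b}.) -/
/-!
Write `r n = Δf n / Δg n` and `Q n = (f b - f n) / (g b - g n)`. When `Δg > 0`, `Q n` is the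
mediant of `r n` and `Q (n + 1)`, since numerator and denominator of `Q n` are the sums of those
of `r n` and `Q (n + 1)`. Downward induction from `Q (b - 1) = r (b - 1)` gives `r n ≤ Q n`, so
`r n < r (n + 1) ≤ Q (n + 1)`, and the mediant `Q n` lies strictly between: `Q n < Q (n + 1)`.
The case `Δg < 0` follows by replacing `f, g` with `-f, -g`.
-/

open Set

section Mediant

variable {K : Type*} [Field K] [LinearOrder K] [IsStrictOrderedRing K] {a b c d : K}

theorem div_lt_add_div_add (hb : 0 < b) (hd : 0 < d) (h : a / b < c / d) :
    a / b < (a + c) / (b + d) := by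
  rw [div_lt_div_iff₀ hb hd] at h
  rw [div_lt_div_iff₀ hb (add_pos hb hd)]
  linarith

theorem add_div_add_lt_div (hb : 0 < b) (hd : 0 < d) (h : a / b < c / d) :
    (a + c) / (b + d) < c / d := by
  rw [div_lt_div_iff₀ hb hd] at h
  rw [div_lt_div_iff₀ (add_pos hb hd) hd]
  linarith

end Mediant

theorem Int.strictMonoOn_Icc_of_lt_add_one_s9 {α : Type*} [Preorder α] {g : ℤ → α} {a b : ℤ}
    (hg : ∀ n ∈ Icc a (b - 1), g n < g (n + 1)) : StrictMonoOn g (Icc a b) :=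
  strictMonoOn_of_lt_add_one ordConnected_Icc fun n _ hn hn1 ↦ hg n ⟨hn.1, by linarith [hn1.2]⟩

namespace DiscreteLHopital

variable {f g : ℤ → ℝ} {a b : ℤ}

theorem chord_div_chord_eq (f g : ℤ → ℝ) (n b : ℤ) :
    (f b - f n) / (g b - g n) =
      ((f (n + 1) - f n) + (f b - f (n + 1))) / ((g (n + 1) - g n) + (g b - g (n + 1))) := by
  congr 1 <;> ring

theorem chord_pos (hg : ∀ n ∈ Icc a (b - 1), 0 < g (n + 1) - g n) {n : ℤ}
    (hn : n ∈ Icc a (b - 1)) : 0 < g b - g n :=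
  sub_pos.2 <| Int.strictMonoOn_Icc_of_lt_add_one_s9 (fun k hk ↦ sub_pos.1 (hg k hk))
    ⟨hn.1, by linarith [hn.2]⟩ ⟨by linarith [hn.1, hn.2], le_rfl⟩ (by linarith [hn.2])

theorem diff_div_diff_le_chord_div_chord (hg : ∀ n ∈ Icc a (b - 1), 0 < g (n + 1) - g n)
    (hmono : StrictMonoOn (fun n ↦ (f (n + 1) - f n) / (g (n + 1) - g n)) (Icc a (b - 1)))
    {n : ℤ} (hn : n ∈ Icc a (b - 1)) :
    (f (n + 1) - f n) / (g (n + 1) - g n) ≤ (f b - f n) / (g b - g n) := by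
  obtain ⟨han, hnb⟩ := hn
  induction n, hnb using Int.leInductionDown with
  | base => simp
  | pred n hnb ih =>
    obtain ⟨m, rfl⟩ : ∃ m, n = m + 1 := ⟨n - 1, by ring⟩
    simp only [add_sub_cancel_right] at han ⊢
    have hm : m ∈ Icc a (b - 1) := ⟨han, by omega⟩
    have hlt : (f (m + 1) - f m) / (g (m + 1) - g m) < (f b - f (m + 1)) / (g b - g (m + 1)) :=
      (hmono hm ⟨by omega, hnb⟩ (lt_add_one m)).trans_le (ih (by omega))
    rw [chord_div_chord_eq f g m b]
    exact (div_lt_add_div_add (hg m hm) (chord_pos hg ⟨by omega, hnb⟩) hlt).le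

theorem chord_div_chord_strictMonoOn (hg : ∀ n ∈ Icc a (b - 1), 0 < g (n + 1) - g n)
    (hmono : StrictMonoOn (fun n ↦ (f (n + 1) - f n) / (g (n + 1) - g n)) (Icc a (b - 1))) :
    StrictMonoOn (fun n ↦ (f b - f n) / (g b - g n)) (Icc a (b - 1)) := by
  refine strictMonoOn_of_lt_add_one ordConnected_Icc fun n _ hn hn1 ↦ ?_
  have hlt : (f (n + 1) - f n) / (g (n + 1) - g n) < (f b - f (n + 1)) / (g b - g (n + 1)) :=
    (hmono hn hn1 (lt_add_one n)).trans_le (diff_div_diff_le_chord_div_chord hg hmono hn1)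
  simp only [chord_div_chord_eq f g n]
  exact add_div_add_lt_div (hg n hn) (chord_pos hg hn1) hlt

end DiscreteLHopital

open DiscreteLHopital in
theorem discrete_lhopital_right_increasing_general
    (a b : ℤ) (f g : ℤ → ℝ)
    (hg : (∀ n ∈ Set.Icc a (b - 1), 0 < g (n + 1) - g n) ∨
          (∀ n ∈ Set.Icc a (b - 1), g (n + 1) - g n < 0))
    (hmono : StrictMonoOn (fun n => (f (n + 1) - f n) / (g (n + 1) - g n))
      (Set.Icc a (b - 1))) :
    StrictMonoOn (fun n => (f n - f b) / (g n - g b))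
      (Set.Icc a (b - 1)) := by
  have hflip (f g : ℤ → ℝ) (m n : ℤ) : (f m - f n) / (g m - g n) = (f n - f m) / (g n - g m) := by
    rw [← neg_sub (f n), ← neg_sub (g n), neg_div_neg_eq]
  have hneg (f g : ℤ → ℝ) (m n : ℤ) :
      ((-f) m - (-f) n) / ((-g) m - (-g) n) = (f m - f n) / (g m - g n) := by
    rw [Pi.neg_apply, Pi.neg_apply, Pi.neg_apply, Pi.neg_apply, neg_sub_neg, neg_sub_neg, hflip]
  simp only [hflip f g _ b]
  rcases hg with hg | hg
  · exact chord_div_chord_strictMonoOn hg hmono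
  · simpa only [hneg] using chord_div_chord_strictMonoOn (f := -f) (g := -g)
      (fun n hn ↦ by simpa using hg n hn) (by simpa only [hneg] using hmono)

/-- Discrete delta-monotone l'Hôpital rule (right endpoint, increasing case),
with forward difference `Δf n = f (n+1) - f n`. -/
theorem discrete_lhopital_right_increasing
    (a b : ℤ) (hab : a + 1 < b) (f g : ℤ → ℝ)
    (hg : (∀ n ∈ Set.Icc a (b - 1), 0 < g (n + 1) - g n) ∨
          (∀ n ∈ Set.Icc a (b - 1), g (n + 1) - g n < 0))
    (hmono : StrictMonoOn (fun n => (f (n + 1) - f n) / (g (n + 1) - g n))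
      (Set.Icc a (b - 1))) :
    StrictMonoOn (fun n => (f n - f b) / (g n - g b))
      (Set.Icc a (b - 1)) :=
  discrete_lhopital_right_increasing_general a b f g hg hmono
end

section
/- Nabla-monotone l'Hôpital rule on the q-scale (left endpoint): fix q ∈ (0,1), let a = q^m and b = q^n be points of the q-scale with a < b (m, n ∈ ℤ), and let f, g : (0,∞) → ℝ. Suppose that either D_q g(x) > 0 for every point x of the q-scale with a < x ≤ b, or D_q g(x) < 0 for every such x. If the function x ↦ D_q f(x)/D_q g(x) is strictly increasing on the set {x ∈ q^ℤ : a < x ≤ b}, then the function x ↦ (f(x) − f(a))/(g(x) − g(a)) is strictly increasing on the set {x ∈ q^ℤ : a < x ≤ b}. (Note g(x) ≠ g(a) for such x, since g is strictly monotone along the q-scale points of [a,b].) -/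
/-- The `q`-derivative of `f` at `x ≠ 0`: `D_q f x = (f (q x) - f x) / ((q - 1) x)`. -/
noncomputable def qDeriv (q : ℝ) (f : ℝ → ℝ) (x : ℝ) : ℝ :=
  (f (q * x) - f x) / ((q - 1) * x)

/-!
Telescoping along the q-scale gives
`h (q ^ k) - h (q ^ m) = ∑_{k ≤ j < m} (1 - q) q ^ j D_q h (q ^ j)`, so the quotient at
`x = q ^ k` is the centre of mass of the values `D_q f / D_q g` at the points `q ^ j`, `k ≤ j < m`,
with weights `(1 - q) q ^ j D_q g (q ^ j)` of constant sign. Moving `x` up to `y` adds the points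
of `[x, y)`, at each of which the ratio exceeds its value at every point already present, so the
centre of mass increases.
-/

open Finset

theorem Int.sum_Ico_sub_add_one {M : Type*} [AddCommGroup M] (F : ℤ → M) {k m : ℤ} (hkm : k ≤ m) :
    ∑ j ∈ Ico k m, (F j - F (j + 1)) = F k - F m := by
  induction m, hkm using Int.leInduction with
  | base => simp
  | succ m hkm ih => rw [← sum_Ico_add_eq_sum_Ico_add_one hkm, ih]; abel

section CenterMass

variable {ι 𝕜 : Type*} [Field 𝕜]

theorem Finset.centerMass_eq_sum_mul_div_sum (s : Finset ι) (w r : ι → 𝕜) :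
    s.centerMass w r = (∑ i ∈ s, w i * r i) / ∑ i ∈ s, w i := by
  simp only [centerMass, smul_eq_mul, inv_mul_eq_div]

variable [LinearOrder 𝕜] [IsStrictOrderedRing 𝕜] [DecidableEq ι] {s t : Finset ι} {w r : ι → 𝕜}
  {c : 𝕜}

theorem Finset.centerMass_lt_centerMass_union_of_pos (hst : Disjoint s t)
    (hw : ∀ i ∈ s ∪ t, 0 < w i) (hs : s.Nonempty) (ht : t.Nonempty) (hsc : ∀ i ∈ s, r i ≤ c) (hct : ∀ j ∈ t, c < r j) :
    s.centerMass w r < (s ∪ t).centerMass w r := by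
  have hP : 0 < ∑ i ∈ s, w i := sum_pos (fun i hi => hw i (mem_union_left t hi)) hs
  have hQ : 0 < ∑ j ∈ t, w j := sum_pos (fun j hj => hw j (mem_union_right s hj)) ht
  have hA : ∑ i ∈ s, w i * r i ≤ c * ∑ i ∈ s, w i := by
    rw [mul_sum]
    exact sum_le_sum fun i hi => by nlinarith [hw i (mem_union_left t hi), hsc i hi]
  have hB : c * ∑ j ∈ t, w j < ∑ j ∈ t, w j * r j := by
    rw [mul_sum]
    exact sum_lt_sum_of_nonempty ht fun j hj => by nlinarith [hw j (mem_union_right s hj), hct j hj]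
  rw [centerMass_eq_sum_mul_div_sum, centerMass_eq_sum_mul_div_sum, sum_union hst, sum_union hst,
    div_lt_div_iff₀ hP (add_pos hP hQ)]
  nlinarith [mul_le_mul_of_nonneg_right hA hQ.le, mul_lt_mul_of_pos_left hB hP]

theorem Finset.centerMass_lt_centerMass_union (hst : Disjoint s t)
    (hw : (∀ i ∈ s ∪ t, 0 < w i) ∨ ∀ i ∈ s ∪ t, w i < 0)
    (hs : s.Nonempty) (ht : t.Nonempty) (hsc : ∀ i ∈ s, r i ≤ c) (hct : ∀ j ∈ t, c < r j) :
    s.centerMass w r < (s ∪ t).centerMass w r := by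
  rcases hw with hw | hw
  · exact centerMass_lt_centerMass_union_of_pos hst hw hs ht hsc hct
  · rw [← centerMass_neg_left, ← centerMass_neg_left (t := s ∪ t)]
    exact centerMass_lt_centerMass_union_of_pos hst (fun i hi => neg_pos.2 (hw i hi)) hs ht hsc hct

theorem Finset.strictAntiOn_centerMass_Ico {w r : ℤ → 𝕜} {n m : ℤ}
    (hw : (∀ j ∈ Set.Ico n m, 0 < w j) ∨ ∀ j ∈ Set.Ico n m, w j < 0)
    (hr : StrictAntiOn r (Set.Ico n m)) :
    StrictAntiOn (fun k => (Ico k m).centerMass w r) (Set.Ico n m) := by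
  intro l hl k hk hlk
  have hsub : ∀ {i j}, i ∈ Ico j m → j ∈ Set.Ico n m → i ∈ Set.Ico n m :=
    fun hi hj => mem_Ico.1 (Ico_subset_Ico_left hj.1 hi)
  have hu : Ico k m ∪ Ico l k = Ico l m := by rw [union_comm, Ico_union_Ico_eq_Ico hlk.le hk.2.le]
  dsimp only
  rw [← hu]
  refine centerMass_lt_centerMass_union (c := r k) (Ico_disjoint_Ico_consecutive l k m).symm ?_
    (nonempty_Ico.2 hk.2) (nonempty_Ico.2 hlk) (fun i hi => ?_) (fun j hj => ?_)
  · rw [hu]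
    exact hw.imp (fun h i hi => h i (hsub hi hl)) (fun h i hi => h i (hsub hi hl))
  · exact (hr.le_iff_ge (hsub hi hk) hk).2 (mem_Ico.1 hi).1
  · exact (hr.lt_iff_gt hk (hsub (Ico_subset_Ico_right hk.2.le hj) hl)).2 (mem_Ico.1 hj).2

end CenterMass

section qDeriv

variable {q : ℝ} (h : ℝ → ℝ)

theorem sub_qmul_eq_mul_qDeriv (hq : q ≠ 1) {x : ℝ} (hx : x ≠ 0) :
    h x - h (q * x) = (1 - q) * x * qDeriv q h x := by
  have : q - 1 ≠ 0 := sub_ne_zero.2 hq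
  rw [qDeriv]
  field_simp
  ring

theorem sub_eq_sum_qDeriv (hq0 : q ≠ 0) (hq1 : q ≠ 1) {k m : ℤ} (hkm : k ≤ m) :
    h (q ^ k) - h (q ^ m) = ∑ j ∈ Ico k m, (1 - q) * q ^ j * qDeriv q h (q ^ j) := by
  rw [← Int.sum_Ico_sub_add_one (fun j => h (q ^ j)) hkm]
  refine sum_congr rfl fun j _ => ?_
  rw [← sub_qmul_eq_mul_qDeriv h hq1 (zpow_ne_zero j hq0), zpow_add_one₀ hq0, mul_comm]

theorem sub_div_sub_eq_centerMass_qDeriv (f g : ℝ → ℝ) (hq0 : q ≠ 0) (hq1 : q ≠ 1) {k m : ℤ}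
    (hkm : k ≤ m) (hg : ∀ j ∈ Ico k m, qDeriv q g (q ^ j) ≠ 0) :
    (f (q ^ k) - f (q ^ m)) / (g (q ^ k) - g (q ^ m)) =
      (Ico k m).centerMass (fun j => (1 - q) * q ^ j * qDeriv q g (q ^ j))
        (fun j => qDeriv q f (q ^ j) / qDeriv q g (q ^ j)) := by
  rw [centerMass_eq_sum_mul_div_sum, sub_eq_sum_qDeriv f hq0 hq1 hkm,
    sub_eq_sum_qDeriv g hq0 hq1 hkm]
  congr 1
  refine sum_congr rfl fun j hj => ?_
  field_simp [hg j hj]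

end qDeriv

theorem zpow_mem_Ioc_zpow_iff {q : ℝ} (hq0 : 0 < q) (hq1 : q < 1) {j m n : ℤ} :
    q ^ j ∈ Set.Ioc (q ^ m) (q ^ n) ↔ j ∈ Set.Ico n m := by
  rw [Set.mem_Ioc, Set.mem_Ico, zpow_lt_zpow_iff_right_of_lt_one₀ hq0 hq1,
    zpow_le_zpow_iff_right_of_lt_one₀ hq0 hq1, and_comm]

theorem qscale_lhopital_left_increasing_general
    (q : ℝ) (hq0 : 0 < q) (hq1 : q < 1) (m n : ℤ) (a b : ℝ)
    (ha : a = q ^ m) (hb : b = q ^ n) (f g : ℝ → ℝ)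
    (S : Set ℝ) (hS : S = {x : ℝ | (∃ k : ℤ, x = q ^ k) ∧ a < x ∧ x ≤ b})
    (hg : (∀ x ∈ S, 0 < qDeriv q g x) ∨ (∀ x ∈ S, qDeriv q g x < 0))
    (hmono : StrictMonoOn (fun x => qDeriv q f x / qDeriv q g x) S) :
    StrictMonoOn (fun x => (f x - f a) / (g x - g a)) S := by
  subst hS ha hb
  have hmaps : Set.MapsTo (fun j : ℤ => q ^ j) (Set.Ico n m)
      {x : ℝ | (∃ k : ℤ, x = q ^ k) ∧ q ^ m < x ∧ x ≤ q ^ n} :=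
    fun j hj => ⟨⟨j, rfl⟩, (zpow_mem_Ioc_zpow_iff hq0 hq1).2 hj⟩
  have hr := hmono.comp_strictAntiOn ((zpow_right_strictAnti₀ hq0 hq1).strictAntiOn _) hmaps
  have hc : ∀ j : ℤ, 0 < (1 - q) * q ^ j := fun j => mul_pos (by linarith) (zpow_pos hq0 j)
  have hw : (∀ j ∈ Set.Ico n m, 0 < (1 - q) * q ^ j * qDeriv q g (q ^ j)) ∨
      ∀ j ∈ Set.Ico n m, (1 - q) * q ^ j * qDeriv q g (q ^ j) < 0 :=
    hg.imp (fun h j hj => mul_pos (hc j) (h _ (hmaps hj)))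
      (fun h j hj => mul_neg_of_pos_of_neg (hc j) (h _ (hmaps hj)))
  have hne : ∀ {j}, j ∈ Set.Ico n m → qDeriv q g (q ^ j) ≠ 0 := fun hj =>
    right_ne_zero_of_mul (hw.elim (fun h => (h _ hj).ne') (fun h => (h _ hj).ne))
  rintro _ ⟨⟨k, rfl⟩, hx⟩ _ ⟨⟨l, rfl⟩, hy⟩ hxy
  replace hx := (zpow_mem_Ioc_zpow_iff hq0 hq1).1 hx
  replace hy := (zpow_mem_Ioc_zpow_iff hq0 hq1).1 hy
  dsimp only
  rw [sub_div_sub_eq_centerMass_qDeriv f g hq0.ne' hq1.ne hx.2.le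
      fun j hj => hne (mem_Ico.1 (Ico_subset_Ico_left hx.1 hj)),
    sub_div_sub_eq_centerMass_qDeriv f g hq0.ne' hq1.ne hy.2.le
      fun j hj => hne (mem_Ico.1 (Ico_subset_Ico_left hy.1 hj))]
  exact strictAntiOn_centerMass_Ico hw hr hy hx
    ((zpow_lt_zpow_iff_right_of_lt_one₀ hq0 hq1).1 hxy)

/-- Nabla-monotone l'Hôpital rule on the q-scale (left endpoint):
if `D_q g` has constant sign on the q-scale points of `(a, b]` and
`D_q f / D_q g` is strictly increasing there, then
`x ↦ (f x - f a) / (g x - g a)` is strictly increasing on the same set. -/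
theorem qscale_lhopital_left_increasing
    (q : ℝ) (hq0 : 0 < q) (hq1 : q < 1) (m n : ℤ) (a b : ℝ)
    (ha : a = q ^ m) (hb : b = q ^ n) (hab : a < b) (f g : ℝ → ℝ)
    (S : Set ℝ) (hS : S = {x : ℝ | (∃ k : ℤ, x = q ^ k) ∧ a < x ∧ x ≤ b})
    (hg : (∀ x ∈ S, 0 < qDeriv q g x) ∨ (∀ x ∈ S, qDeriv q g x < 0))
    (hmono : StrictMonoOn (fun x => qDeriv q f x / qDeriv q g x) S) :
    StrictMonoOn (fun x => (f x - f a) / (g x - g a)) S :=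
  qscale_lhopital_left_increasing_general q hq0 hq1 m n a b ha hb f g S hS hg hmono
end

section
/- Lower bound for the q-exponential: fix q ∈ (0,1), let a = q^m and b = q^ℓ be points of the q-scale with a < b, suppose q^{-1}a ≤ b and b < 1/(1−q) and q^{-1}a < 1/(1−q), and let n ∈ ℕ, n ≥ 1. Then for every point x of the q-scale with q^{-1}a ≤ x ≤ b one has e_q^x ≥ Σ_{k=0}^{n−1} (e_q^a/[k]!) (x−a)^k_q + [ (e_q^{q^{-1}a} − Σ_{k=0}^{n−1} (e_q^a/[k]!) (q^{-1}a − a)^k_q ) / (q^{-1}a − a)^n_q ] · (x−a)^n_q. -/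
/-- The q-bracket of a natural number: `[k] = (q^k - 1)/(q - 1)`. -/
noncomputable def qNat (q : ℝ) (k : ℕ) : ℝ := (q ^ k - 1) / (q - 1)

/-- The q-factorial: `[0]! = 1`, `[k+1]! = [k+1] ⬝ [k]!`. -/
noncomputable def qFactorial (q : ℝ) : ℕ → ℝ
  | 0 => 1
  | k + 1 => qNat q (k + 1) * qFactorial q k

/-- The q-shifted power `(x - a)^k_q = ∏_{j=0}^{k-1} (x - q^j a)`. -/
noncomputable def qShiftedPow (q x a : ℝ) (k : ℕ) : ℝ :=
  ∏ j ∈ Finset.range k, (x - q ^ j * a)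

/-- The q-exponential `e_q^x = Σ_{k=0}^∞ x^k/[k]!`. -/
noncomputable def qExp (q x : ℝ) : ℝ := ∑' k : ℕ, x ^ k / qFactorial q k

/-
On the q-scale the q-exponential is pinned down by the q-difference equation
`e_q^{qx} = (1 - (1 - q) x) e_q^x` and its value at a single point: its q-Taylor series
`Σ e_q^a / [k]! (x - a)^k_q` at `a` satisfies the same equation and equals `e_q^a` at `x = a`,
so the two agree at every `x = q^{-j} a` below `1/(1-q)`. All Taylor coefficients are positive,
and for `a < w ≤ x` the ratio `(x - a)^k_q / (w - a)^k_q` is nondecreasing in `k`, so the tail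
of the series at `x` from `k = n` on dominates `(x - a)^n_q / (w - a)^n_q` times the tail at `w`.
Taking `w = q⁻¹ a` gives the bound.
-/

open Finset Filter Topology

variable {q : ℝ}

lemma qFactorial_pos (hq0 : 0 ≤ q) (hq1 : q < 1) : ∀ k, 0 < qFactorial q k
  | 0 => one_pos
  | k + 1 => by
    have hk : q ^ (k + 1) < 1 := pow_lt_one₀ hq0 hq1 k.succ_ne_zero
    exact mul_pos (div_pos_of_neg_of_neg (by linarith) (by linarith)) (qFactorial_pos hq0 hq1 k)

lemma qFactorial_succ_mul (hq1 : q < 1) (k : ℕ) :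
    qFactorial q (k + 1) * (1 - q) = (1 - q ^ (k + 1)) * qFactorial q k := by
  have : q - 1 ≠ 0 := by linarith
  simp only [qFactorial, qNat]
  field_simp
  ring

lemma qExp_nonneg (hq0 : 0 ≤ q) (hq1 : q < 1) {x : ℝ} (hx : 0 ≤ x) : 0 ≤ qExp q x :=
  tsum_nonneg fun k => div_nonneg (pow_nonneg hx k) (qFactorial_pos hq0 hq1 k).le

lemma summable_pow_div_qFactorial (hq0 : 0 ≤ q) (hq1 : q < 1) {x : ℝ} (hx : |x| < 1 / (1 - q)) :
    Summable fun k => x ^ k / qFactorial q k := by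
  rcases eq_or_ne x 0 with rfl | hx0
  · refine summable_of_ne_finset_zero (s := {0}) fun k hk => ?_
    simp [zero_pow (by simpa using hk : k ≠ 0)]
  have hl : |x| * (1 - q) < 1 := by rwa [lt_div_iff₀ (by linarith)] at hx
  refine summable_of_ratio_test_tendsto_lt_one hl
    (.of_forall fun k => div_ne_zero (pow_ne_zero k hx0) (qFactorial_pos hq0 hq1 k).ne') ?_
  have hratio : ∀ k : ℕ, ‖x ^ (k + 1) / qFactorial q (k + 1)‖ / ‖x ^ k / qFactorial q k‖
      = |x| * (1 - q) / (1 - q ^ (k + 1)) := fun k => by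
    have hk : q ^ (k + 1) < 1 := pow_lt_one₀ hq0 hq1 k.succ_ne_zero
    have hFk := qFactorial_pos hq0 hq1 k
    have hFk1 := qFactorial_pos hq0 hq1 (k + 1)
    rw [norm_div, norm_div, norm_pow, norm_pow, Real.norm_of_nonneg hFk.le,
      Real.norm_of_nonneg hFk1.le, Real.norm_eq_abs]
    have : 1 - q ^ (k + 1) ≠ 0 := by linarith
    field_simp
    linear_combination -|x| ^ (k + 1) * qFactorial_succ_mul hq1 k
  have hpow : Tendsto (fun k : ℕ => q ^ (k + 1)) atTop (𝓝 0) :=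
    (tendsto_pow_atTop_nhds_zero_of_lt_one hq0 hq1).comp (tendsto_add_atTop_nat 1)
  simp_rw [hratio]
  have hden : Tendsto (fun k : ℕ => 1 - q ^ (k + 1)) atTop (𝓝 1) := by
    simpa using tendsto_const_nhds.sub hpow
  simpa [div_eq_mul_inv] using (hden.inv₀ one_ne_zero).const_mul (|x| * (1 - q))

lemma abs_qShiftedPow_le (hq0 : 0 ≤ q) (hq1 : q ≤ 1) {x a : ℝ} (hx : 0 ≤ x) (ha : 0 ≤ a)
    (k : ℕ) : |qShiftedPow q x a k| ≤ max x a ^ k := by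
  rw [qShiftedPow, abs_prod]
  calc ∏ j ∈ range k, |x - q ^ j * a| ≤ ∏ _j ∈ range k, max x a :=
        prod_le_prod (fun _ _ => abs_nonneg _) fun j _ =>
          abs_sub_le_of_nonneg_of_le hx (le_max_left _ _) (by positivity)
            ((mul_le_of_le_one_left ha (pow_le_one₀ hq0 hq1)).trans (le_max_right _ _))
    _ = max x a ^ k := by simp

lemma summable_qTaylor (hq0 : 0 ≤ q) (hq1 : q < 1) (C : ℝ) {x a : ℝ} (hx : 0 ≤ x)
    (hxr : x < 1 / (1 - q)) (ha : 0 ≤ a) (har : a < 1 / (1 - q)) :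
    Summable fun k => C / qFactorial q k * qShiftedPow q x a k := by
  have hr : |max x a| < 1 / (1 - q) := by
    rw [abs_of_nonneg (le_max_of_le_left hx)]; exact max_lt hxr har
  refine .of_norm_bounded ((summable_pow_div_qFactorial hq0 hq1 hr).mul_left |C|) fun k => ?_
  have hFk := qFactorial_pos hq0 hq1 k
  rw [norm_mul, norm_div, Real.norm_of_nonneg hFk.le, Real.norm_eq_abs, Real.norm_eq_abs]
  calc |C| / qFactorial q k * |qShiftedPow q x a k| ≤ |C| / qFactorial q k * max x a ^ k := by
        gcongr; exact abs_qShiftedPow_le hq0 hq1.le hx ha k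
    _ = |C| * (max x a ^ k / qFactorial q k) := by ring

lemma qShiftedPow_zero (x a : ℝ) : qShiftedPow q x a 0 = 1 := prod_range_zero _

lemma qShiftedPow_succ (x a : ℝ) (k : ℕ) :
    qShiftedPow q x a (k + 1) = qShiftedPow q x a k * (x - q ^ k * a) :=
  prod_range_succ _ _

lemma qShiftedPow_add (x a : ℝ) (n i : ℕ) :
    qShiftedPow q x a (n + i) = qShiftedPow q x a n * ∏ j ∈ range i, (x - q ^ (n + j) * a) :=
  prod_range_add _ _ _

lemma qShiftedPow_mul_left_succ (x a : ℝ) (k : ℕ) :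
    qShiftedPow q (q * x) a (k + 1) = (q * x - a) * q ^ k * qShiftedPow q x a k := by
  induction k with
  | zero => simp [qShiftedPow]
  | succ k ih =>
    rw [qShiftedPow_succ, ih, qShiftedPow_succ]
    ring

lemma qShiftedPow_succ_sub_mul_left (x a : ℝ) (k : ℕ) :
    qShiftedPow q x a (k + 1) - qShiftedPow q (q * x) a (k + 1)
      = (1 - q ^ (k + 1)) * x * qShiftedPow q x a k := by
  rw [qShiftedPow_mul_left_succ, qShiftedPow_succ]
  ring

lemma tsum_qTaylor_mul_left (hq0 : 0 ≤ q) (hq1 : q < 1) (C : ℝ) {x a : ℝ} (hx : 0 ≤ x)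
    (hxr : x < 1 / (1 - q)) (ha : 0 ≤ a) (har : a < 1 / (1 - q)) :
    ∑' k, C / qFactorial q k * qShiftedPow q (q * x) a k
      = (1 - (1 - q) * x) * ∑' k, C / qFactorial q k * qShiftedPow q x a k := by
  have hqx : q * x ≤ x := mul_le_of_le_one_left hx hq1.le
  have hs := summable_qTaylor hq0 hq1 C hx hxr ha har
  have hs' := summable_qTaylor hq0 hq1 C (by positivity) (hqx.trans_lt hxr) ha har
  have hterm : ∀ k : ℕ, C / qFactorial q (k + 1) * qShiftedPow q x a (k + 1)
      - C / qFactorial q (k + 1) * qShiftedPow q (q * x) a (k + 1)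
      = (1 - q) * x * (C / qFactorial q k * qShiftedPow q x a k) := fun k => by
    have hFk := (qFactorial_pos hq0 hq1 k).ne'
    have hFk1 := (qFactorial_pos hq0 hq1 (k + 1)).ne'
    rw [← mul_sub, qShiftedPow_succ_sub_mul_left]
    field_simp
    linear_combination -(C * x * qShiftedPow q x a k) * qFactorial_succ_mul hq1 k
  have hdiff := (hs.sub hs').tsum_eq_zero_add
  rw [hs.tsum_sub hs', tsum_congr hterm, tsum_mul_left] at hdiff
  simp only [qShiftedPow_zero, sub_self, zero_add] at hdiff
  linear_combination -hdiff

lemma tsum_qTaylor_self (C a : ℝ) : ∑' k, C / qFactorial q k * qShiftedPow q a a k = C := by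
  rw [tsum_eq_single 0 fun k hk => ?_]
  · simp [qShiftedPow_zero, qFactorial]
  · rw [qShiftedPow, prod_eq_zero (mem_range.2 (Nat.pos_of_ne_zero hk)) (by simp), mul_zero]

lemma qExp_eq_tsum_qTaylor_zero (x : ℝ) :
    qExp q x = ∑' k, 1 / qFactorial q k * qShiftedPow q x 0 k := by
  simp [qExp, qShiftedPow, div_eq_inv_mul]

lemma qExp_mul_left (hq0 : 0 ≤ q) (hq1 : q < 1) {x : ℝ} (hx : 0 ≤ x) (hxr : x < 1 / (1 - q)) :
    qExp q (q * x) = (1 - (1 - q) * x) * qExp q x := by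
  rw [qExp_eq_tsum_qTaylor_zero, qExp_eq_tsum_qTaylor_zero]
  have h1q : 0 < 1 - q := by linarith
  exact tsum_qTaylor_mul_left hq0 hq1 1 hx hxr le_rfl (by positivity)

theorem qExp_eq_tsum_qTaylor (hq0 : 0 < q) (hq1 : q < 1) {a : ℝ} (ha : 0 ≤ a) :
    ∀ (j : ℕ) {y : ℝ}, q ^ j * y = a → y < 1 / (1 - q) →
      qExp q y = ∑' k, qExp q a / qFactorial q k * qShiftedPow q y a k
  | 0, y, hy, _ => by
    rw [pow_zero, one_mul] at hy
    rw [hy, tsum_qTaylor_self]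
  | j + 1, y, hy, hyr => by
    have hy0 : 0 ≤ y := nonneg_of_mul_nonneg_right (hy ▸ ha) (by positivity)
    have hqy : q * y ≤ y := mul_le_of_le_one_left hy0 hq1.le
    have hay : a ≤ y := hy ▸ mul_le_of_le_one_left hy0 (pow_le_one₀ hq0.le hq1.le)
    have ih := qExp_eq_tsum_qTaylor hq0 hq1 ha j (y := q * y) (by rw [← hy]; ring)
      (hqy.trans_lt hyr)
    have hne : 1 - (1 - q) * y ≠ 0 := by
      rw [lt_div_iff₀ (by linarith)] at hyr; nlinarith
    apply mul_left_cancel₀ hne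
    rw [← qExp_mul_left hq0.le hq1 hy0 hyr,
      ← tsum_qTaylor_mul_left hq0.le hq1 _ hy0 hyr ha (hay.trans_lt hyr), ih]

lemma qShiftedPow_mul_div_le (hq0 : 0 ≤ q) (hq1 : q ≤ 1) {a w x : ℝ} (ha : 0 ≤ a) (haw : a < w)
    (hwx : w ≤ x) {n k : ℕ} (hnk : n ≤ k) :
    qShiftedPow q w a k * (qShiftedPow q x a n / qShiftedPow q w a n) ≤ qShiftedPow q x a k := by
  have hfac : ∀ j : ℕ, 0 < w - q ^ j * a := fun j =>
    sub_pos.2 ((mul_le_of_le_one_left ha (pow_le_one₀ hq0 hq1)).trans_lt haw)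
  have hPw : 0 < qShiftedPow q w a n := prod_pos fun j _ => hfac j
  have hPx : 0 < qShiftedPow q x a n := prod_pos fun j _ => (hfac j).trans_le (by linarith)
  obtain ⟨i, rfl⟩ := Nat.exists_eq_add_of_le hnk
  rw [qShiftedPow_add, qShiftedPow_add, mul_right_comm, mul_div_cancel₀ _ hPw.ne']
  gcongr
  exact fun j _ => (hfac _).le

lemma sum_add_tsum_sub_sum_mul_le {f g : ℕ → ℝ} (hf : Summable f) (hg : Summable g) {n : ℕ}
    {ρ : ℝ} (h : ∀ k, n ≤ k → g k * ρ ≤ f k) :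
    ∑ k ∈ range n, f k + (∑' k, g k - ∑ k ∈ range n, g k) * ρ ≤ ∑' k, f k := by
  rw [← hf.sum_add_tsum_nat_add n, ← hg.sum_add_tsum_nat_add n, add_sub_cancel_left,
    ← tsum_mul_right]
  refine add_le_add le_rfl ?_
  exact (((summable_nat_add_iff n).2 hg).mul_right ρ).tsum_le_tsum (fun i => h _ (by omega))
    ((summable_nat_add_iff n).2 hf)

lemma exists_pow_mul_zpow_eq (hq0 : 0 < q) (hq1 : q < 1) {k m : ℤ} (h : q ^ m ≤ q ^ k) :
    ∃ j : ℕ, q ^ j * q ^ k = q ^ m := by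
  have hkm : k ≤ m := (zpow_le_zpow_iff_right_of_lt_one₀ hq0 hq1).1 h
  refine ⟨(m - k).toNat, ?_⟩
  rw [← zpow_natCast, Int.toNat_of_nonneg (by omega), ← zpow_add₀ hq0.ne', sub_add_cancel]

theorem qExp_lower_bound_general
    (q : ℝ) (hq0 : 0 < q) (hq1 : q < 1) (m : ℤ) (a b : ℝ)
    (ha : a = q ^ m) (hbr : b < 1 / (1 - q)) (har : q⁻¹ * a < 1 / (1 - q))
    (n : ℕ) :
    ∀ x : ℝ, (∃ k : ℤ, x = q ^ k) → q⁻¹ * a ≤ x → x ≤ b →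
      qExp q x ≥
        (∑ k ∈ Finset.range n, qExp q a / qFactorial q k * qShiftedPow q x a k) +
        (qExp q (q⁻¹ * a) -
            ∑ k ∈ Finset.range n,
              qExp q a / qFactorial q k * qShiftedPow q (q⁻¹ * a) a k) /
          qShiftedPow q (q⁻¹ * a) a n * qShiftedPow q x a n := by
  rintro x ⟨k, rfl⟩ hwx hxb
  have ha0 : 0 < a := ha ▸ zpow_pos hq0 m
  have haw : a < q⁻¹ * a := lt_mul_left ha0 ((one_lt_inv₀ hq0).2 hq1)
  have hxr : q ^ k < 1 / (1 - q) := hxb.trans_lt hbr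
  obtain ⟨j, hj⟩ := exists_pow_mul_zpow_eq hq0 hq1 (ha ▸ (haw.trans_le hwx).le)
  have hw : q ^ 1 * (q⁻¹ * a) = a := by field_simp
  rw [ge_iff_le, qExp_eq_tsum_qTaylor hq0 hq1 ha0.le j (ha ▸ hj) hxr,
    qExp_eq_tsum_qTaylor hq0 hq1 ha0.le 1 hw har, div_mul_eq_mul_div, mul_div_assoc]
  have hcoeff := qExp_nonneg hq0.le hq1 ha0.le
  refine sum_add_tsum_sub_sum_mul_le
    (summable_qTaylor hq0.le hq1 _ (zpow_pos hq0 k).le hxr ha0.le (haw.trans har))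
    (summable_qTaylor hq0.le hq1 _ (haw.le.trans' ha0.le) har ha0.le (haw.trans har))
    fun i hi => ?_
  rw [mul_assoc]
  exact mul_le_mul_of_nonneg_left (qShiftedPow_mul_div_le hq0.le hq1.le ha0.le haw hwx hi)
    (div_nonneg hcoeff (qFactorial_pos hq0.le hq1 i).le)

/-- Lower bound for the q-exponential on the q-scale. -/
theorem qExp_lower_bound
    (q : ℝ) (hq0 : 0 < q) (hq1 : q < 1) (m l : ℤ) (a b : ℝ)
    (ha : a = q ^ m) (hb : b = q ^ l) (hab : a < b)
    (hab' : q⁻¹ * a ≤ b) (hbr : b < 1 / (1 - q)) (har : q⁻¹ * a < 1 / (1 - q))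
    (n : ℕ) (hn : 1 ≤ n) :
    ∀ x : ℝ, (∃ k : ℤ, x = q ^ k) → q⁻¹ * a ≤ x → x ≤ b →
      qExp q x ≥
        (∑ k ∈ Finset.range n, qExp q a / qFactorial q k * qShiftedPow q x a k) +
        (qExp q (q⁻¹ * a) -
            ∑ k ∈ Finset.range n,
              qExp q a / qFactorial q k * qShiftedPow q (q⁻¹ * a) a k) /
          qShiftedPow q (q⁻¹ * a) a n * qShiftedPow q x a n :=
  qExp_lower_bound_general q hq0 hq1 m a b ha hbr har n
end
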